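/- arXiv:2507.09187 — 6 statements merged into one kernel-verified Lean document; each statement's English description precedes it below -/
import Mathlib

section
/- A permutation π of [n] is 321-avoiding if and only if both the subsequence of π formed by its excedances (letters π_i with π_i > i) and the subsequence formed by the remaining letters are increasing. -/
open scoped Classical
noncomputable section

/-- Stack-sorting `S` implemented with fuel: `S(L n R) = S(L) S(R) n`. -/
def ssFuel : ℕ → List ℕ → List ℕ
  | 0, _ => []
  | _ + 1, [] => []
  | f + 1, x :: xs =>
    let l := x :: xs
    let m := l.foldr max 0
    let i := l.idxOf m
    ssFuel f (l.take i) ++ ssFuel f (l.drop (i + 1)) ++ [m]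

def stackSort (l : List ℕ) : List ℕ := ssFuel l.length l

/-- One-line word (with letters `1,…,n`) of a permutation of `Fin n`. -/
def word {n : ℕ} (π : Equiv.Perm (Fin n)) : List ℕ := List.ofFn fun i => (π i : ℕ) + 1

/-- The identity word `1 2 ⋯ n`. -/
def sortedWord (n : ℕ) : List ℕ := List.ofFn fun i : Fin n => (i : ℕ) + 1

/-- `π` is `t`-stack-sortable. -/
def StackSortable (t : ℕ) {n : ℕ} (π : Equiv.Perm (Fin n)) : Prop :=
  stackSort^[t] (word π) = sortedWord n

/-- `π` avoids the pattern `p`. -/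
def Avoids {n k : ℕ} (π : Equiv.Perm (Fin n)) (p : Equiv.Perm (Fin k)) : Prop :=
  ¬ ∃ f : Fin k → Fin n, StrictMono f ∧ ∀ a b : Fin k, p a < p b ↔ π (f a) < π (f b)

def p321 : Equiv.Perm (Fin 3) := Fin.revPerm
def p213 : Equiv.Perm (Fin 3) := Equiv.swap 0 1
def p231 : Equiv.Perm (Fin 3) := finRotate 3
def p132 : Equiv.Perm (Fin 3) := Equiv.swap 1 2

def mlw {n : ℕ} (π : Equiv.Perm (Fin n)) : ℕ :=
  (Finset.univ.filter fun j : Fin n => ∀ k, j < k → π j < π k).sup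
    fun j => (j : ℕ) - (π j : ℕ)

def fixNum {n : ℕ} (π : Equiv.Perm (Fin n)) : ℕ :=
  (Finset.univ.filter fun i => π i = i).card

def dropNum {n : ℕ} (π : Equiv.Perm (Fin n)) : ℕ :=
  (Finset.univ.filter fun i => π i < i).card

def desNum {n : ℕ} (π : Equiv.Perm (Fin n)) : ℕ :=
  (Finset.univ.filter fun i : Fin n =>
    ∃ h : (i : ℕ) + 1 < n, π ⟨(i : ℕ) + 1, h⟩ < π i).card

def badNum {n : ℕ} (π : Equiv.Perm (Fin n)) : ℕ :=
  (Finset.univ.filter fun i : Fin n =>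
    (∀ j, i < j → π i < π j) ∧
      ((i : ℕ) = 0 ∨
        π ⟨(i : ℕ) - 1, lt_of_le_of_lt (Nat.sub_le _ _) i.isLt⟩ < π i)).card

def invNum {n : ℕ} (π : Equiv.Perm (Fin n)) : ℕ :=
  (Finset.univ.filter fun p : Fin n × Fin n => p.1 < p.2 ∧ π p.2 < π p.1).card

/-- Binary trees with natural-number labels. -/
inductive BT : Type
  | leaf : BT
  | node : BT → ℕ → BT → BT
  deriving DecidableEq

/-- The increasing-binary-tree map `λ`, implemented with fuel. -/
def lamFuel : ℕ → List ℕ → BT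
  | 0, _ => .leaf
  | f + 1, [] => .leaf
  | f + 1, x :: xs =>
    let l := x :: xs
    let m := xs.foldr min x
    let i := l.idxOf m
    .node (lamFuel f (l.take i)) m (lamFuel f (l.drop (i + 1)))

def lam (l : List ℕ) : BT := lamFuel l.length l

/-- In-order reading word of a binary tree. -/
def BT.labels : BT → List ℕ
  | .leaf => []
  | .node l x r => l.labels ++ x :: r.labels

/-- Maximum number of right edges in a descending path starting at the root. -/
def rstart : BT → ℕ
  | .leaf => 0
  | .node l _ .leaf => rstart l
  | .node l _ r => max (rstart l) (1 + rstart r)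

/-- Maximum number of right edges in any descending path of the tree. -/
def rany : BT → ℕ
  | .leaf => 0
  | .node l x r => max (rstart (.node l x r)) (max (rany l) (rany r))

def BT.isLeaf : BT → Bool
  | .leaf => true
  | _ => false

/-- Does the tree contain a left edge? -/
def hasLeft : BT → Bool
  | .leaf => false
  | .node l _ r => (!l.isLeaf) || hasLeft l || hasLeft r

/-- The right arm of a tree: the list of pairs (label, left subtree) along the maximal
right path from the root. -/
def armSubs : BT → List (ℕ × BT)
  | .leaf => []
  | .node l x r => (x, l) :: armSubs r

/-- `lrrp`: one plus the maximal number of right edges in a restricted (right-arm-avoiding)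
descending path; `0` if the tree has no left edge. -/
def lrrp (T : BT) : ℕ :=
  if hasLeft T then 1 + ((armSubs T).map fun p => rany p.2).foldr max 0 else 0

/-- A pure right chain: no node has a left child. -/
def isRightChain : BT → Prop
  | .leaf => True
  | .node l _ r => l = .leaf ∧ isRightChain r

/-- Increasing binary tree: each label is smaller than all labels in its subtrees. -/
def Increasing : BT → Prop
  | .leaf => True
  | .node l x r =>
      (∀ y ∈ l.labels, x < y) ∧ (∀ y ∈ r.labels, x < y) ∧ Increasing l ∧ Increasing r

/-- `321`-avoiding tree: every right chain hangs off the right arm (equivalently, the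
path from the root to any right leaf has exactly one left edge), and the right chains are
ordered consistently with their attaching nodes. -/
def Is321Tree (T : BT) : Prop :=
  (∀ p ∈ armSubs T, isRightChain p.2) ∧
    ∀ p ∈ armSubs T, ∀ q ∈ armSubs T, p.2 ≠ BT.leaf → q.2 ≠ BT.leaf →
      (p.1 < q.1 ↔ ∀ a ∈ p.2.labels, ∀ b ∈ q.2.labels, a < b)

/-- Labels of nodes without right child. -/
def noRight : BT → List ℕ
  | .leaf => []
  | .node l x .leaf => noRight l ++ [x]
  | .node l x r => noRight l ++ noRight r

/-- Labels of the right leaves: nodes without right child not on the right arm. -/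
def rightLeafLabels (T : BT) : List ℕ :=
  ((armSubs T).map fun p => noRight p.2).flatten

/-- `a` is the value of a right-to-left minimum of the word `w`. -/
def IsRLMinVal (w : List ℕ) (a : ℕ) : Prop :=
  ∃ j, j < w.length ∧ w.getD j 0 = a ∧ ∀ k, j < k → k < w.length → a < w.getD k 0

/-- Insert `b` immediately before the first letter exceeding `b` (or at the end). -/
def insBefore (b : ℕ) : List ℕ → List ℕ
  | [] => [b]
  | x :: xs => if b < x then b :: x :: xs else x :: insBefore b xs

/-- The relocation `S_b`: delete `b` and reinsert it immediately before the leftmost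
letter to the right of its position that exceeds `b`, or at the end. -/
def reloc (b : ℕ) (w : List ℕ) : List ℕ :=
  w.take (w.idxOf b) ++ insBefore b (w.drop (w.idxOf b + 1))

/-- The descent tops of `w`, listed in increasing order. -/
def dtopList (w : List ℕ) : List ℕ :=
  (((List.range (w.length - 1)).filter fun i => w.getD (i + 1) 0 < w.getD i 0).map
      fun i => w.getD i 0).mergeSort fun a b => decide (a ≤ b)

/-!
An inversion `i < j`, `π j < π i` with `j ≤ π j` forces a third letter: if every position
after `j` carried a value above `π j`, then `π` would map `{i} ∪ (j, n)` injectively into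
`(π j, n)`, giving `π j < j`. Dually, an inversion with `π i ≤ i` forces a larger value
before `i`. So two excedances (or two non-excedances) in inverted order extend to a `321`;
conversely, of the three letters of a `321` two have the same excedance status.
-/

open Finset

namespace Equiv.Perm

variable {n : ℕ} (π : Perm (Fin n))

theorem avoids_p321_iff :
    Avoids π p321 ↔ ∀ i j k : Fin n, i < j → j < k → ¬ (π k < π j ∧ π j < π i) := by
  have pattern_iff : ∀ f : Fin 3 → Fin n,
      (∀ a b, p321 a < p321 b ↔ π (f a) < π (f b)) ↔ StrictAnti (π ∘ f) := fun f =>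
    ⟨fun h a b hab => (h b a).1 (Fin.rev_lt_rev.2 hab),
      fun h _ _ => Fin.rev_lt_rev.trans h.lt_iff_gt.symm⟩
  simp only [Avoids, pattern_iff]
  constructor
  · rintro hav i j k hij hjk ⟨hkj, hji⟩
    refine hav ⟨![i, j, k], Fin.strictMono_iff_lt_succ.2 ?_, Fin.strictAnti_iff_succ_lt.2 ?_⟩ <;>
      intro a <;> fin_cases a <;> assumption
  · rintro h ⟨f, hf, hπf⟩
    exact h (f 0) (f 1) (f 2) (hf (by decide)) (hf (by decide))
      ⟨hπf (by decide : (1 : Fin 3) < 2), hπf (by decide : (0 : Fin 3) < 1)⟩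

theorem exists_gt_apply_lt_of_le_apply {i j : Fin n} (hij : i < j) (hπ : π j < π i)
    (hj : j ≤ π j) : ∃ k, j < k ∧ π k < π j := by
  by_contra! h
  have hmaps : Set.MapsTo π (insert i (Ioi j) : Finset _) (Ioi (π j) : Finset _) := by
    intro k hk
    simp only [coe_insert, coe_Ioi, Set.mem_insert_iff, Set.mem_Ioi] at hk ⊢
    rcases hk with rfl | hk
    · exact hπ
    · exact (h k hk).lt_of_ne (π.injective.ne hk.ne)
  have hcard := card_le_card_of_injOn π hmaps π.injective.injOn
  rw [card_insert_of_notMem (by simpa using hij.le), Fin.card_Ioi, Fin.card_Ioi] at hcard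
  have : (j : ℕ) ≤ π j := hj
  omega

theorem exists_lt_apply_gt_of_apply_le {i j : Fin n} (hij : i < j) (hπ : π j < π i)
    (hi : π i ≤ i) : ∃ h, h < i ∧ π i < π h := by
  by_contra! h
  have hmaps : Set.MapsTo π (insert j (Iio i) : Finset _) (Iio (π i) : Finset _) := by
    intro k hk
    simp only [coe_insert, coe_Iio, Set.mem_insert_iff, Set.mem_Iio] at hk ⊢
    rcases hk with rfl | hk
    · exact hπ
    · exact (h k hk).lt_of_ne (π.injective.ne hk.ne)
  have hcard := card_le_card_of_injOn π hmaps π.injective.injOn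
  rw [card_insert_of_notMem (by simpa using hij.le), Fin.card_Iio, Fin.card_Iio] at hcard
  have : (π i : ℕ) ≤ i := hi
  omega

end Equiv.Perm

open Equiv.Perm in
/-- `π` is 321-avoiding iff the subsequence of excedances and the subsequence of the
remaining letters are both increasing. -/
theorem stmt4 (n : ℕ) (π : Equiv.Perm (Fin n)) :
    Avoids π p321 ↔
      ((∀ i j : Fin n, i < j → i < π i → j < π j → π i < π j) ∧
        (∀ i j : Fin n, i < j → ¬ i < π i → ¬ j < π j → π i < π j)) := by
  rw [avoids_p321_iff]
  constructor
  · intro hav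
    refine ⟨fun i j hij _ hj => (π.injective.ne hij.ne).lt_or_gt.resolve_right fun hπ => ?_,
      fun i j hij hi _ => (π.injective.ne hij.ne).lt_or_gt.resolve_right fun hπ => ?_⟩
    · obtain ⟨k, hjk, hk⟩ := exists_gt_apply_lt_of_le_apply π hij hπ hj.le
      exact hav i j k hij hjk ⟨hk, hπ⟩
    · obtain ⟨h, hhi, hh⟩ := exists_lt_apply_gt_of_apply_le π hij hπ (not_lt.1 hi)
      exact hav h i j hhi hij ⟨hπ, hh⟩
  · rintro ⟨hexc, hnexc⟩ i j k hij hjk ⟨hkj, hji⟩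
    have alternates : ∀ a b, a < b → π b < π a → (a < π a ↔ ¬ b < π b) := fun a b hab hba =>
      ⟨fun ha hb => (hexc a b hab ha hb).asymm hba,
        fun hb => by_contra fun ha => (hnexc a b hab ha hb).asymm hba⟩
    have := alternates i j hij hji
    have := alternates j k hjk hkj
    have := alternates i k (hij.trans hjk) (hkj.trans hji)
    tauto

end
end

section
/- Let π be a 321-avoiding permutation of [n] and t ≥ 1. Then π avoids the pattern 23⋯(t+2)1 if and only if mlw(π) ≤ t, where mlw(π) is the maximum of j − π_j over all right-to-left minima π_j of π. -/
open scoped Classical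
noncomputable section

/-!
All values below a right-to-left minimum `π j` lie to its left, so exactly `j - π j` letters
to its left exceed it. An occurrence of `23⋯(t+2)1` whose last letter sits at `k` puts `t + 1`
letters to the left of, and above, the first right-to-left minimum at or after `k`; hence
`mlw π ≥ t + 1`. Conversely, if `π` avoids `321`, the letters to the left of a right-to-left
minimum that exceed it increase, so `j - π j ≥ t + 1` of them together with `π j` form the
pattern.
-/

open Finset

namespace Equiv.Perm

variable {n : ℕ} (π : Equiv.Perm (Fin n))

def IsRLMin (j : Fin n) : Prop := ∀ k, j < k → π j < π k

theorem card_filter_apply_lt (c : Fin n) : #{i | π i < c} = c := by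
  have : ({i | π i < c} : Finset (Fin n)) = (Iio c).map π.symm.toEmbedding := by
    ext i
    simp
  rw [this, card_map, Fin.card_Iio]

variable {π}

theorem IsRLMin.lt_of_apply_lt {j i : Fin n} (hj : π.IsRLMin j) (hi : π i < π j) : i < j := by
  refine lt_of_not_ge fun hji => ?_
  rcases hji.eq_or_lt with rfl | hji
  · exact lt_irrefl _ hi
  · exact (hj i hji).not_gt hi

theorem IsRLMin.card_filter_lt_and_apply_gt {j : Fin n} (hj : π.IsRLMin j) :
    #{i | i < j ∧ π j < π i} = j - π j := by
  have hsub : ({i | π i < π j} : Finset (Fin n)) ⊆ Iio j := fun i hi =>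
    mem_Iio.2 (hj.lt_of_apply_lt (mem_filter.1 hi).2)
  have hset : ({i | i < j ∧ π j < π i} : Finset (Fin n)) =
      Iio j \ ({i | π i < π j} : Finset (Fin n)) := by
    ext i
    simp only [mem_filter, mem_sdiff, mem_Iio, mem_univ, true_and, not_lt]
    refine and_congr_right fun hij => ⟨le_of_lt, fun hle => hle.lt_of_ne ?_⟩
    exact fun he => hij.ne' (π.injective he)
  rw [hset, card_sdiff_of_subset hsub, Fin.card_Iio, card_filter_apply_lt]

theorem exists_isRLMin_le (k : Fin n) : ∃ j, k ≤ j ∧ π j ≤ π k ∧ π.IsRLMin j := by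
  obtain ⟨j, hj, hmin⟩ := (Ici k).exists_min_image π ⟨k, mem_Ici.2 le_rfl⟩
  refine ⟨j, mem_Ici.1 hj, hmin k (mem_Ici.2 le_rfl), fun i hji => ?_⟩
  exact (hmin i (mem_Ici.2 ((mem_Ici.1 hj).trans hji.le))).lt_of_ne
    fun he => hji.ne' (π.injective he.symm)

theorem IsRLMin.sub_le_mlw {j : Fin n} (hj : π.IsRLMin j) : (j : ℕ) - π j ≤ mlw π :=
  le_sup (f := fun j : Fin n => (j : ℕ) - (π j : ℕ)) (mem_filter.2 ⟨mem_univ j, hj⟩)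

theorem exists_isRLMin_lt_sub_of_lt_mlw {m : ℕ} (hm : m < mlw π) :
    ∃ j, π.IsRLMin j ∧ m < (j : ℕ) - π j := by
  obtain ⟨j, hj, hlt⟩ := Finset.lt_sup_iff.1 hm
  exact ⟨j, (mem_filter.1 hj).2, hlt⟩

theorem card_le_mlw (s : Finset (Fin n)) (k : Fin n) (hs : ∀ i ∈ s, i < k ∧ π k < π i) :
    #s ≤ mlw π := by
  obtain ⟨j, hkj, hjk, hj⟩ := exists_isRLMin_le (π := π) k
  calc #s ≤ #{i | i < j ∧ π j < π i} := card_le_card fun i hi =>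
        mem_filter.2 ⟨mem_univ i, ((hs i hi).1.trans_le hkj), hjk.trans_lt (hs i hi).2⟩
    _ = j - π j := hj.card_filter_lt_and_apply_gt
    _ ≤ mlw π := hj.sub_le_mlw

theorem not_avoids_p321 {i₁ i₂ i₃ : Fin n} (h₁₂ : i₁ < i₂) (h₂₃ : i₂ < i₃)
    (v₁₂ : π i₂ < π i₁) (v₂₃ : π i₃ < π i₂) : ¬ Avoids π p321 := by
  refine not_not.2 ⟨![i₁, i₂, i₃], ?_, ?_⟩
  · refine Fin.strictMono_iff_lt_succ.2 fun a => ?_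
    fin_cases a <;> simpa
  · intro a b
    fin_cases a <;> fin_cases b <;> simp [p321, v₁₂, v₂₃, v₂₃.trans v₁₂, v₁₂.le, v₂₃.le,
      (v₂₃.trans v₁₂).le]

theorem not_avoids_finRotate_iff {m : ℕ} :
    ¬ Avoids π (finRotate (m + 1)) ↔ ∃ (g : Fin m → Fin n) (k : Fin n),
      StrictMono g ∧ StrictMono (π ∘ g) ∧ ∀ a, g a < k ∧ π k < π (g a) := by
  unfold Avoids
  rw [not_not]
  constructor
  · rintro ⟨f, hf, hπf⟩
    refine ⟨f ∘ Fin.castSucc, f (Fin.last m), hf.comp Fin.strictMono_castSucc,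
      fun a b hab => ?_, fun a => ⟨hf (Fin.castSucc_lt_last a), ?_⟩⟩
    · simpa [hab] using (hπf a.castSucc b.castSucc).1
    · simpa using (hπf (Fin.last m) a.castSucc).1
  · rintro ⟨g, k, hg, hπg, hgk⟩
    refine ⟨Fin.snoc (α := fun _ => Fin n) g k, ?_, ?_⟩
    · intro a b hab
      cases b using Fin.lastCases with
      | last => cases a using Fin.lastCases with
        | last => exact absurd hab (lt_irrefl _)
        | cast a => simpa using (hgk a).1
      | cast b => cases a using Fin.lastCases with
        | last => exact absurd hab (Fin.castSucc_lt_last b).not_gt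
        | cast a => simpa using hg (Fin.castSucc_lt_castSucc_iff.1 hab)
    · intro a b
      cases a using Fin.lastCases <;> cases b using Fin.lastCases
      all_goals simp [(hgk _).2, ((hgk _).2).le]
      exact hπg.lt_iff_lt.symm

theorem IsRLMin.exists_strictMono_of_avoids_p321 (h : Avoids π p321) {j : Fin n}
    (hj : π.IsRLMin j) {m : ℕ} (hm : m ≤ (j : ℕ) - π j) :
    ∃ g : Fin m → Fin n, StrictMono g ∧ StrictMono (π ∘ g) ∧ ∀ a, g a < j ∧ π j < π (g a) := by
  set S : Finset (Fin n) := {i | i < j ∧ π j < π i}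
  have hS (a : Fin m) := (mem_filter.1 (S.orderEmbOfCardLe_mem
    (hm.trans hj.card_filter_lt_and_apply_gt.ge) a)).2
  refine ⟨_, (S.orderEmbOfCardLe _).strictMono, fun a b hab => ?_, hS⟩
  -- two letters above `π j` in decreasing order would form a 321 with `π j`
  by_contra! hle
  exact not_avoids_p321 ((S.orderEmbOfCardLe _).strictMono hab) (hS b).1
    (hle.lt_of_ne fun he => hab.ne' ((S.orderEmbOfCardLe _).injective (π.injective he)))
    (hS b).2 h

end Equiv.Perm

open Equiv.Perm in
theorem stmt6_general (n t : ℕ) (π : Equiv.Perm (Fin n)) (h : Avoids π p321) :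
    Avoids π (finRotate (t + 2)) ↔ mlw π ≤ t := by
  rw [← not_iff_not, not_avoids_finRotate_iff, not_le]
  constructor
  · rintro ⟨g, k, hg, -, hgk⟩
    calc t < #(univ.map ⟨g, hg.injective⟩) := by simp
      _ ≤ mlw π := card_le_mlw _ k (by simpa using hgk)
  · intro hlt
    obtain ⟨j, hj, htj⟩ := exists_isRLMin_lt_sub_of_lt_mlw hlt
    obtain ⟨g, hg, hπg, hgj⟩ := hj.exists_strictMono_of_avoids_p321 h htj
    exact ⟨g, j, hg, hπg, hgj⟩

/-- A 321-avoiding `π` avoids the pattern `23⋯(t+2)1` iff `mlw(π) ≤ t`. -/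
theorem stmt6 (n t : ℕ) (ht : 1 ≤ t) (π : Equiv.Perm (Fin n)) (h : Avoids π p321) :
    Avoids π (finRotate (t + 2)) ↔ mlw π ≤ t :=
  stmt6_general n t π h
end
end

section
/- For every t ≥ 1, the set of t-stack-sortable 321-avoiding permutations of [n] equals the set of permutations of [n] avoiding both 321 and the pattern 23⋯(t+2)1. -/
open scoped Classical
noncomputable section

/-!
Let `numLargerBefore w x` count the letters larger than `x` to the left of `x` in `w`.
If `w` avoids 321 and has maximum `m`, write `w = L m R`; then `R` is increasing, so
`S(L m R) = S(L) R m`. By induction over this decomposition, one stack-sorting pass lowers every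
positive count by exactly one. It also keeps `w` 321-avoiding, because `S` creates no new
inversions. Hence `S^t(w)` is sorted iff every count is at most `t`. The letters larger than `x`
that precede it in a 321-avoiding word form an increasing sequence, so a count above `t` is an
occurrence of `23⋯(t+2)1`.
-/

open List

theorem List.pair_sublist_append_iff {α : Type*} {a b : α} {l₁ l₂ : List α} :
    [a, b] <+ l₁ ++ l₂ ↔ [a, b] <+ l₁ ∨ (a ∈ l₁ ∧ b ∈ l₂) ∨ [a, b] <+ l₂ := by
  constructor
  · rw [sublist_append_iff]
    rintro ⟨_ | ⟨c, _ | ⟨d, l⟩⟩, l', h, h₁, h₂⟩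
    · simp only [nil_append] at h
      exact .inr (.inr (h ▸ h₂))
    · obtain ⟨rfl, rfl⟩ : c = a ∧ l' = [b] := by simpa [eq_comm] using h
      exact .inr (.inl ⟨singleton_sublist.1 h₁, singleton_sublist.1 h₂⟩)
    · obtain ⟨rfl, rfl, rfl, rfl⟩ : c = a ∧ d = b ∧ l = [] ∧ l' = [] := by
        simpa [eq_comm] using h
      exact .inl h₁
  · rintro (h | ⟨ha, hb⟩ | h)
    · exact h.trans (sublist_append_left _ _)
    · exact (singleton_sublist.2 ha).append (singleton_sublist.2 hb)
    · exact h.trans (sublist_append_right _ _)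

theorem List.Nodup.triple_sublist {α : Type*} {w : List α} (hw : w.Nodup) {a b c : α}
    (hab : [a, b] <+ w) (hbc : [b, c] <+ w) : [a, b, c] <+ w := by
  obtain ⟨r₁, r₂, rfl, ha, hb⟩ := cons_sublist_iff.1 hab
  have hb₁ : b ∉ r₁ := fun hb₁ => (nodup_append.1 hw).2.2 b hb₁ b (singleton_sublist.1 hb) rfl
  rcases pair_sublist_append_iff.1 hbc with h | ⟨h, -⟩ | h
  · exact absurd (h.subset mem_cons_self) hb₁
  · exact absurd h hb₁
  · exact (singleton_sublist.2 ha).append h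

theorem List.ofFn_sublist_ofFn_iff {α : Type*} {k n : ℕ} (g : Fin k → α) (v : Fin n → α) :
    ofFn g <+ ofFn v ↔ ∃ f : Fin k → Fin n, StrictMono f ∧ ∀ i, g i = v (f i) := by
  rw [sublist_iff_exists_fin_orderEmbedding_get_eq]
  constructor
  · rintro ⟨e, he⟩
    refine ⟨fun i => Fin.cast length_ofFn (e (Fin.cast length_ofFn.symm i)),
      fun i j hij => e.strictMono hij, fun i => ?_⟩
    have := he (Fin.cast length_ofFn.symm i)
    simp only [get_ofFn, Fin.cast_cast, Fin.cast_eq_self] at this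
    exact this
  · rintro ⟨f, hf, hg⟩
    refine ⟨OrderEmbedding.ofStrictMono
      (fun i => Fin.cast length_ofFn.symm (f (Fin.cast length_ofFn i))) fun i j hij => hf hij,
      fun i => ?_⟩
    simp only [get_ofFn, hg]
    rfl

lemma foldr_max_mem {l : List ℕ} (h : l ≠ []) : l.foldr max 0 ∈ l :=
  maximum_mem (foldr_max_of_ne_nil h).symm

@[elab_as_elim]
theorem List.Nodup.induction_max {P : List ℕ → Prop} {w : List ℕ} (hw : w.Nodup) (nil : P [])
    (append_cons : ∀ L m R, (∀ y ∈ L, y < m) → (∀ y ∈ R, y < m) → (L ++ m :: R).Nodup →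
      P L → P R → P (L ++ m :: R)) : P w := by
  induction hlen : w.length using Nat.strong_induction_on generalizing w with
  | _ n ih =>
  rcases eq_or_ne w [] with rfl | hne
  · exact nil
  obtain ⟨m, hm, hle⟩ : ∃ m ∈ w, ∀ y ∈ w, y ≤ m :=
    ⟨_, foldr_max_mem hne, fun y hy => le_max_of_le hy le_rfl⟩
  obtain ⟨L, R, rfl⟩ := append_of_mem hm
  subst hlen
  have hL : ∀ y ∈ L, y < m := fun y hy =>
    (hle y (by simp [hy])).lt_of_ne ((nodup_append.1 hw).2.2 y hy m mem_cons_self)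
  have hR : ∀ y ∈ R, y < m := fun y hy =>
    (hle y (by simp [hy])).lt_of_ne fun h => (nodup_cons.1 (nodup_append.1 hw).2.1).1 (h ▸ hy)
  exact append_cons L m R hL hR hw
    (ih _ (by simp) (hw.sublist (sublist_append_left _ _)) rfl)
    (ih _ (by simp; omega)
      (hw.sublist ((sublist_cons_self m R).trans (sublist_append_right L _))) rfl)

lemma ssFuel_nil (f : ℕ) : ssFuel f [] = [] := by cases f <;> rfl

lemma ssFuel_congr : ∀ {f g : ℕ} {w : List ℕ}, w.length ≤ f → w.length ≤ g →
    ssFuel f w = ssFuel g w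
  | f, g, [], _, _ => by rw [ssFuel_nil, ssFuel_nil]
  | f + 1, g + 1, x :: xs, hf, hg => by
    have hi : (x :: xs).idxOf ((x :: xs).foldr max 0) < xs.length + 1 :=
      idxOf_lt_length_iff.mpr (foldr_max_mem (cons_ne_nil x xs))
    simp only [length_cons, Nat.add_le_add_iff_right] at hf hg
    rw [ssFuel, ssFuel]
    congr 2 <;> apply ssFuel_congr <;> simp only [length_take, length_drop, length_cons] <;> omega

lemma ssFuel_eq_stackSort {f : ℕ} {w : List ℕ} (h : w.length ≤ f) : ssFuel f w = stackSort w :=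
  ssFuel_congr h le_rfl

lemma ssFuel_perm : ∀ {f : ℕ} {w : List ℕ}, w.length ≤ f → ssFuel f w ~ w
  | _, [], _ => by rw [ssFuel_nil]
  | f + 1, x :: xs, hf => by
    rw [ssFuel]
    set l := x :: xs
    set m := l.foldr max 0
    set i := l.idxOf m
    have hi : i < l.length := idxOf_lt_length_iff.mpr (foldr_max_mem (cons_ne_nil x xs))
    have hl : l.length = xs.length + 1 := rfl
    have hA := ssFuel_perm (f := f) (w := l.take i) (by rw [length_take]; omega)
    have hB := ssFuel_perm (f := f) (w := l.drop (i + 1)) (by rw [length_drop]; omega)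
    calc ssFuel f (l.take i) ++ ssFuel f (l.drop (i + 1)) ++ [m]
        ~ m :: (l.take i ++ l.drop (i + 1)) :=
          (perm_append_singleton _ _).trans ((hA.append hB).cons m)
      _ ~ l.take i ++ m :: l.drop (i + 1) := perm_middle.symm
      _ = l := by rw [← getElem_idxOf hi, getElem_cons_drop, take_append_drop]

theorem stackSort_perm (w : List ℕ) : stackSort w ~ w := ssFuel_perm le_rfl

theorem stackSort_iterate_perm (t : ℕ) (w : List ℕ) : stackSort^[t] w ~ w := by
  induction t generalizing w with
  | zero => rfl
  | succ t ih => exact (ih _).trans (stackSort_perm w)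

theorem stackSort_append_cons {L R : List ℕ} {m : ℕ} (hL : ∀ y ∈ L, y < m)
    (hR : ∀ y ∈ R, y < m) : stackSort (L ++ m :: R) = stackSort L ++ stackSort R ++ [m] := by
  have hmax : (L ++ m :: R).foldr max 0 = m := by
    refine le_antisymm (max_le_of_forall_le _ _ fun y hy => ?_) (le_max_of_le (by simp) le_rfl)
    rcases mem_append.1 hy with hy | hy | ⟨_, hy⟩
    exacts [(hL y hy).le, le_rfl, (hR y hy).le]
  have hidx : (L ++ m :: R).idxOf m = L.length := by
    rw [idxOf_append_of_notMem fun h => (hL m h).false, idxOf_cons_self, Nat.add_zero]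
  obtain ⟨x, xs, hw⟩ : ∃ x xs, L ++ m :: R = x :: xs := exists_cons_of_ne_nil (by simp)
  have hlen : (L ++ m :: R).length = xs.length + 1 := by rw [hw, length_cons]
  rw [stackSort, hlen, hw, ssFuel, ← hw, hmax, hidx, take_left' rfl, drop_append,
    drop_eq_nil_of_le (by omega), Nat.add_sub_cancel_left, drop_one, tail_cons, nil_append]
  simp only [length_append, length_cons] at hlen
  rw [ssFuel_eq_stackSort (by omega), ssFuel_eq_stackSort (by omega)]

theorem sublist_of_pair_sublist_stackSort {w : List ℕ} (hw : w.Nodup) {a b : ℕ} (hba : b < a)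
    (h : [a, b] <+ stackSort w) : [a, b] <+ w := by
  revert h
  refine Nodup.induction_max hw id fun L m R hL hR _ ihL ihR h => ?_
  rw [stackSort_append_cons hL hR] at h
  rcases pair_sublist_append_iff.1 h with h | ⟨ha, hb⟩ | h
  · rcases pair_sublist_append_iff.1 h with h | ⟨ha, hb⟩ | h
    · exact (ihL h).trans (sublist_append_left _ _)
    · exact pair_sublist_append_iff.2 <| .inr <| .inl
        ⟨(stackSort_perm L).subset ha, mem_cons_of_mem m ((stackSort_perm R).subset hb)⟩
    · exact (ihR h).trans ((sublist_cons_self m R).trans (sublist_append_right L _))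
  · obtain rfl : b = m := mem_singleton.1 hb
    rcases mem_append.1 ha with ha | ha
    · exact absurd (hL a ((stackSort_perm L).subset ha)) hba.asymm
    · exact absurd (hR a ((stackSort_perm R).subset ha)) hba.asymm
  · simpa using h.length_le

theorem stackSort_eq_self {w : List ℕ} (hw : w.Pairwise (· < ·)) : stackSort w = w := by
  have hnodup : (stackSort w).Nodup := (stackSort_perm w).nodup_iff.2 hw.nodup
  refine (stackSort_perm w).eq_of_pairwise (fun _ _ _ _ h h' => absurd h' h.asymm) ?_ hw
  refine pairwise_iff_forall_sublist.2 fun {a b} hab => ?_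
  rcases lt_trichotomy a b with h | rfl | h
  · exact h
  · exact absurd hab (nodup_iff_sublist.1 hnodup a)
  · exact absurd (pairwise_iff_forall_sublist.1 hw
      (sublist_of_pair_sublist_stackSort hw.nodup h hab)) h.asymm

def Avoids321 (w : List ℕ) : Prop := ¬ ∃ a b c, [a, b, c] <+ w ∧ c < b ∧ b < a

theorem Avoids321.sublist {w w' : List ℕ} (h : Avoids321 w) (hs : w' <+ w) : Avoids321 w' :=
  fun ⟨a, b, c, habc, hcb, hba⟩ => h ⟨a, b, c, habc.trans hs, hcb, hba⟩

theorem Avoids321.stackSort {w : List ℕ} (hw : w.Nodup) (h : Avoids321 w) :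
    Avoids321 (stackSort w) := fun ⟨a, b, c, habc, hcb, hba⟩ =>
  h ⟨a, b, c, hw.triple_sublist
    (sublist_of_pair_sublist_stackSort hw hba ((sublist_append_left [a, b] [c]).trans habc))
    (sublist_of_pair_sublist_stackSort hw hcb ((sublist_cons_self a [b, c]).trans habc)),
    hcb, hba⟩

theorem Avoids321.pairwise_lt_of_cons {m : ℕ} {R : List ℕ} (h : Avoids321 (m :: R))
    (hR : ∀ y ∈ R, y < m) (hn : R.Nodup) : R.Pairwise (· < ·) :=
  pairwise_iff_forall_sublist.2 fun {a b} hab =>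
    (not_lt.1 fun hba => h ⟨m, a, b, hab.cons_cons m, hba, hR a (hab.subset mem_cons_self)⟩
      ).lt_of_ne (pairwise_iff_forall_sublist.1 hn hab)

def numLargerBefore (w : List ℕ) (x : ℕ) : ℕ := (w.takeWhile (· ≠ x)).countP (x < ·)

theorem numLargerBefore_append_of_mem {A : List ℕ} (B : List ℕ) {x : ℕ} (hx : x ∈ A) :
    numLargerBefore (A ++ B) x = numLargerBefore A x := by
  induction A with
  | nil => simp at hx
  | cons a A ih =>
    by_cases hax : a = x
    · simp [numLargerBefore, hax]
    · have ih := ih ((mem_cons.1 hx).resolve_left (Ne.symm hax))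
      simp only [numLargerBefore] at ih ⊢
      rw [cons_append, takeWhile_cons_of_pos (by simpa using hax),
        takeWhile_cons_of_pos (by simpa using hax), countP_cons, countP_cons, ih]

theorem numLargerBefore_append_of_notMem {A : List ℕ} (B : List ℕ) {x : ℕ} (hx : x ∉ A) :
    numLargerBefore (A ++ B) x = A.countP (x < ·) + numLargerBefore B x := by
  rw [numLargerBefore,
    takeWhile_append_of_pos fun a ha => by simpa using ne_of_mem_of_not_mem ha hx, countP_append]
  rfl

@[simp]
theorem numLargerBefore_cons_self (x : ℕ) (B : List ℕ) : numLargerBefore (x :: B) x = 0 := by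
  simp [numLargerBefore]

theorem numLargerBefore_eq_zero_of_pairwise {w : List ℕ} (hw : w.Pairwise (· < ·)) {x : ℕ}
    (hx : x ∈ w) : numLargerBefore w x = 0 := by
  obtain ⟨A, B, rfl⟩ := append_of_mem hx
  have hA : ∀ a ∈ A, a < x := fun a ha => (pairwise_append.1 hw).2.2 a ha x mem_cons_self
  rw [numLargerBefore_append_of_notMem _ fun h => (hA x h).false, numLargerBefore_cons_self,
    countP_eq_zero.2 fun a ha => by simpa using (hA a ha).le]

theorem pairwise_lt_iff_forall_numLargerBefore_eq_zero {w : List ℕ} (hw : w.Nodup) :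
    w.Pairwise (· < ·) ↔ ∀ x ∈ w, numLargerBefore w x = 0 := by
  refine ⟨fun h x hx => numLargerBefore_eq_zero_of_pairwise h hx, fun h => ?_⟩
  induction w with
  | nil => exact .nil
  | cons a w ih =>
    have hb : ∀ b ∈ w, ¬ b < a ∧ numLargerBefore w b = 0 := fun b hb => by
      have hba : b ≠ a := fun hba => (nodup_cons.1 hw).1 (hba ▸ hb)
      have hab := h b (mem_cons_of_mem a hb)
      rw [← singleton_append, numLargerBefore_append_of_notMem _ (by simpa using hba)] at hab
      simpa using hab
    refine pairwise_cons.2 ⟨fun b hb' => ?_, ih (nodup_cons.1 hw).2 fun b hb' => (hb b hb').2⟩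
    exact (not_lt.1 (hb b hb').1).lt_of_ne fun hab => (nodup_cons.1 hw).1 (hab ▸ hb')

/-- Since `R` is increasing, a letter of `R` keeps, among the larger letters on its left, exactly
those of `L`: it loses only `m`. -/
theorem numLargerBefore_stackSort {w : List ℕ} (hw : w.Nodup) (h : Avoids321 w) {x : ℕ}
    (hx : x ∈ w) : numLargerBefore (stackSort w) x = numLargerBefore w x - 1 := by
  revert h hx
  refine Nodup.induction_max hw (by simp) fun L m R hL hR hw ihL _ h hx => ?_
  have hRsorted : R.Pairwise (· < ·) := (h.sublist (sublist_append_right _ _)).pairwise_lt_of_cons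
    hR (hw.sublist ((sublist_cons_self m R).trans (sublist_append_right L _)))
  rw [stackSort_append_cons hL hR, stackSort_eq_self hRsorted, append_assoc]
  by_cases hxL : x ∈ L
  · rw [numLargerBefore_append_of_mem _ ((stackSort_perm L).mem_iff.2 hxL),
      numLargerBefore_append_of_mem _ hxL, ihL (h.sublist (sublist_append_left _ _)) hxL]
  rw [numLargerBefore_append_of_notMem _ ((stackSort_perm L).mem_iff.not.2 hxL),
    numLargerBefore_append_of_notMem _ hxL, (stackSort_perm L).countP_eq]
  rcases mem_cons.1 ((mem_append.1 hx).resolve_left hxL) with rfl | hxR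
  · have hLx : L.countP (x < ·) = 0 := countP_eq_zero.2 fun y hy => by simpa using (hL y hy).le
    have hRx : R.countP (x < ·) = 0 := countP_eq_zero.2 fun y hy => by simpa using (hR y hy).le
    rw [numLargerBefore_append_of_notMem _ fun h => (hR x h).false, hLx, hRx]
    simp
  · rw [numLargerBefore_append_of_mem _ hxR, ← singleton_append,
      numLargerBefore_append_of_notMem _ (by simpa using (hR x hxR).ne),
      numLargerBefore_eq_zero_of_pairwise hRsorted hxR]
    simp [hR x hxR]

theorem numLargerBefore_stackSort_iterate {w : List ℕ} (hw : w.Nodup) (h : Avoids321 w) {x : ℕ}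
    (hx : x ∈ w) (t : ℕ) : numLargerBefore (stackSort^[t] w) x = numLargerBefore w x - t := by
  induction t generalizing w with
  | zero => rfl
  | succ t ih =>
    rw [Function.iterate_succ_apply, ih ((stackSort_perm w).nodup_iff.2 hw) (h.stackSort hw)
      ((stackSort_perm w).mem_iff.2 hx), numLargerBefore_stackSort hw h hx, Nat.sub_sub,
      Nat.add_comm]

theorem pairwise_lt_stackSort_iterate_iff {w : List ℕ} (hw : w.Nodup) (h : Avoids321 w)
    (t : ℕ) : (stackSort^[t] w).Pairwise (· < ·) ↔ ∀ x ∈ w, numLargerBefore w x ≤ t := by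
  have hp := stackSort_iterate_perm t w
  rw [pairwise_lt_iff_forall_numLargerBefore_eq_zero (hp.nodup_iff.2 hw)]
  simp only [hp.mem_iff]
  exact forall₂_congr fun x hx => by
    rw [numLargerBefore_stackSort_iterate hw h hx, Nat.sub_eq_zero_iff_le]

theorem sublist_takeWhile_ne_of_append_singleton {w u : List ℕ} (hw : w.Nodup) {x : ℕ}
    (hx : x ∉ u) (h : u ++ [x] <+ w) : u <+ w.takeWhile (· ≠ x) := by
  induction w generalizing u with
  | nil => exact absurd (sublist_nil.1 h) (by simp)
  | cons a w ih =>
    obtain ⟨haw, hw'⟩ := nodup_cons.1 hw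
    rcases u with _ | ⟨b, u⟩
    · exact nil_sublist _
    rcases sublist_cons_iff.1 h with h | ⟨r, heq, h⟩
    · have hax : a ≠ x := fun hax => haw (hax ▸ h.subset (by simp))
      rw [takeWhile_cons_of_pos (by simpa using hax)]
      exact (ih hw' hx h).cons a
    · obtain ⟨rfl, rfl⟩ := cons.inj heq
      have hbx : b ≠ x := fun hbx => hx (hbx ▸ mem_cons_self)
      rw [takeWhile_cons_of_pos (by simpa using hbx)]
      exact (ih hw' (fun h => hx (mem_cons_of_mem _ h)) h).cons_cons b

theorem exists_increasing_larger_before_iff {w : List ℕ} (hw : w.Nodup) (h : Avoids321 w)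
    (k : ℕ) : (∃ u x, u ++ [x] <+ w ∧ u.length = k ∧ u.Pairwise (· < ·) ∧ ∀ y ∈ u, x < y) ↔
      ∃ x ∈ w, k ≤ numLargerBefore w x := by
  constructor
  · rintro ⟨u, x, hsub, rfl, -, hlt⟩
    refine ⟨x, hsub.subset (by simp), ?_⟩
    calc u.length = u.countP (x < ·) :=
          (countP_eq_length.2 fun y hy => by simpa using hlt y hy).symm
      _ ≤ numLargerBefore w x := (sublist_takeWhile_ne_of_append_singleton hw
          (fun hx => (hlt x hx).false) hsub).countP_le
  · rintro ⟨x, hx, hk⟩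
    obtain ⟨A, B, rfl⟩ := append_of_mem hx
    have hxA : x ∉ A := fun hxA => (nodup_append.1 hw).2.2 x hxA x mem_cons_self rfl
    rw [numLargerBefore_append_of_notMem _ hxA, numLargerBefore_cons_self, Nat.add_zero,
      countP_eq_length_filter] at hk
    set v := A.filter (x < ·)
    have hv : v ++ [x] <+ A ++ x :: B :=
      (filter_sublist (l := A)).append ((nil_sublist B).cons_cons x)
    have hvx : ∀ y ∈ v, x < y := fun y hy => by simpa using (mem_filter.1 hy).2
    have hsorted : v.Pairwise (· < ·) := pairwise_iff_forall_sublist.2 fun {a b} hab =>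
      (not_lt.1 fun hba => h ⟨a, b, x, (hab.append (Sublist.refl [x])).trans hv,
        hvx b (hab.subset (by simp)), hba⟩).lt_of_ne
        (pairwise_iff_forall_sublist.1 (hw.sublist ((sublist_append_left v [x]).trans hv)) hab)
    exact ⟨v.take k, x, ((take_sublist k v).append (Sublist.refl [x])).trans hv,
      length_take_of_le hk, hsorted.sublist (take_sublist k v),
      fun y hy => hvx y ((take_sublist k v).subset hy)⟩

theorem word_nodup {n : ℕ} (π : Equiv.Perm (Fin n)) : (word π).Nodup :=
  nodup_ofFn.2 fun _ _ h => π.injective (Fin.ext (Nat.succ_injective h))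

theorem word_perm_sortedWord {n : ℕ} (π : Equiv.Perm (Fin n)) : word π ~ sortedWord n :=
  π.ofFn_comp_perm fun i => (i : ℕ) + 1

theorem eq_sortedWord_iff_pairwise {n : ℕ} {v : List ℕ} (hv : v ~ sortedWord n) :
    v = sortedWord n ↔ v.Pairwise (· < ·) := by
  have hsorted : (sortedWord n).Pairwise (· < ·) := pairwise_ofFn.2 fun _ _ => Nat.succ_lt_succ
  refine ⟨fun h => h ▸ hsorted, fun h => hv.eq_of_pairwise ?_ h hsorted⟩
  exact fun _ _ _ _ hab hba => absurd hba hab.asymm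

theorem not_avoids_iff {n k : ℕ} (π : Equiv.Perm (Fin n)) (p : Equiv.Perm (Fin k)) :
    ¬ Avoids π p ↔ ∃ g : Fin k → ℕ, ofFn g <+ word π ∧ ∀ a b, p a < p b ↔ g a < g b := by
  rw [Avoids, not_not, word]
  constructor
  · rintro ⟨f, hf, hp⟩
    exact ⟨fun i => π (f i) + 1, (ofFn_sublist_ofFn_iff _ _).2 ⟨f, hf, fun i => rfl⟩,
      fun a b => (hp a b).trans Nat.add_lt_add_iff_right.symm⟩
  · rintro ⟨g, hsub, hp⟩
    obtain ⟨f, hf, hg⟩ := (ofFn_sublist_ofFn_iff _ _).1 hsub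
    exact ⟨f, hf, fun a b => (hp a b).trans (by rw [hg, hg]; exact Nat.add_lt_add_iff_right)⟩

theorem avoids_p321_iff {n : ℕ} (π : Equiv.Perm (Fin n)) :
    Avoids π p321 ↔ Avoids321 (word π) := by
  rw [← not_not (a := Avoids π p321), not_avoids_iff, Avoids321]
  refine not_congr ⟨fun ⟨g, hsub, hp⟩ => ⟨g 0, g 1, g 2, by simpa [ofFn_succ] using hsub,
    (hp 2 1).1 (by decide), (hp 1 0).1 (by decide)⟩, fun ⟨a, b, c, hsub, hcb, hba⟩ =>
      ⟨![a, b, c], by simpa [ofFn_succ] using hsub, fun i j => ?_⟩⟩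
  fin_cases i <;> fin_cases j <;> simp [p321] <;> omega

theorem forall_finRotate_lt_iff {t : ℕ} (g : Fin (t + 2) → ℕ) :
    (∀ a b, finRotate (t + 2) a < finRotate (t + 2) b ↔ g a < g b) ↔
      StrictMono (fun i : Fin (t + 1) => g i.castSucc) ∧
        ∀ i : Fin (t + 1), g (Fin.last _) < g i.castSucc := by
  have hcs : ∀ i : Fin (t + 1), (finRotate (t + 2) i.castSucc : ℕ) = i + 1 := fun i =>
    coe_finRotate_of_ne_last (Fin.castSucc_lt_last i).ne
  have hlast : finRotate (t + 2) (Fin.last _) = 0 := finRotate_last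
  constructor
  · intro h
    refine ⟨fun i j hij => (h _ _).1 ?_, fun i => (h _ _).1 ?_⟩
    · rw [Fin.lt_def, hcs, hcs]; exact Nat.succ_lt_succ hij
    · rw [Fin.lt_def, hcs, hlast]; exact Nat.succ_pos _
  · rintro ⟨hmono, hmin⟩ a b
    induction a using Fin.lastCases <;> induction b using Fin.lastCases
    · exact iff_of_false (lt_irrefl _) (lt_irrefl _)
    · exact iff_of_true (by rw [Fin.lt_def, hcs, hlast]; exact Nat.succ_pos _) (hmin _)
    · exact iff_of_false (by rw [Fin.lt_def, hcs, hlast]; exact Nat.not_lt_zero _) (hmin _).asymm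
    · rw [Fin.lt_def, hcs, hcs, Nat.succ_lt_succ_iff, ← Fin.lt_def, hmono.lt_iff_lt]

theorem not_avoids_finRotate_iff {n t : ℕ} (π : Equiv.Perm (Fin n)) :
    ¬ Avoids π (finRotate (t + 2)) ↔
      ∃ u x, u ++ [x] <+ word π ∧ u.length = t + 1 ∧ u.Pairwise (· < ·) ∧ ∀ y ∈ u, x < y := by
  simp_rw [not_avoids_iff, forall_finRotate_lt_iff]
  constructor
  · rintro ⟨g, hsub, hmono, hmin⟩
    refine ⟨ofFn fun i : Fin (t + 1) => g i.castSucc, g (Fin.last _), ?_, length_ofFn,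
      pairwise_ofFn.2 fun i j hij => hmono hij, fun y hy => ?_⟩
    · rwa [ofFn_succ', concat_eq_append] at hsub
    · obtain ⟨i, rfl⟩ := mem_ofFn.1 hy
      exact hmin i
  · rintro ⟨u, x, hsub, hlen, hsorted, hmin⟩
    refine ⟨Fin.snoc (fun i : Fin (t + 1) => u[i]) x, ?_, fun i j hij => ?_, fun i => ?_⟩
    · rw [ofFn_succ', concat_eq_append]
      simp only [Fin.snoc_castSucc, Fin.snoc_last]
      convert hsub
      exact ext_getElem (by simp [hlen]) fun i _ _ => List.getElem_ofFn ..
    · simp only [Fin.snoc_castSucc]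
      exact pairwise_iff_getElem.1 hsorted _ _ _ _ hij
    · simp only [Fin.snoc_castSucc, Fin.snoc_last]
      exact hmin _ (getElem_mem _)

theorem stmt7_general (n t : ℕ) :
    ∀ π : Equiv.Perm (Fin n),
      (StackSortable t π ∧ Avoids π p321) ↔
        (Avoids π p321 ∧ Avoids π (finRotate (t + 2))) := by
  intro π
  rw [and_comm, and_congr_right_iff, avoids_p321_iff]
  intro h321
  have hw := word_nodup π
  rw [StackSortable,
    eq_sortedWord_iff_pairwise ((stackSort_iterate_perm t _).trans (word_perm_sortedWord π)),
    pairwise_lt_stackSort_iterate_iff hw h321, ← not_iff_not, not_avoids_finRotate_iff,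
    exists_increasing_larger_before_iff hw h321]
  push Not
  rfl

/-- `S_n^t(321) = S_n(321, 23⋯(t+2)1)` for every `t ≥ 1`. -/
theorem stmt7 (n t : ℕ) (ht : 1 ≤ t) :
    ∀ π : Equiv.Perm (Fin n),
      (StackSortable t π ∧ Avoids π p321) ↔
        (Avoids π p321 ∧ Avoids π (finRotate (t + 2))) :=
  stmt7_general n t

end
end

section
/- For a 321-avoiding permutation π of [n], the number of inversions of π equals the sum over all right-to-left minima π_j of (j − π_j). -/
open scoped Classical
noncomputable section

/-!
Group the inversions `(i, j)` by their right end `j`. If `π` avoids `321`, every such `j`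
is a right-to-left minimum, since a smaller value to the right of `j` would complete a `321`
pattern with `i` and `j`. At a right-to-left minimum all `π j` smaller values sit to the left
of `j`, so exactly `j - π j` of the `j` earlier entries exceed `π j`.
-/

open Finset

theorem Avoids.not_321 {n : ℕ} {π : Equiv.Perm (Fin n)} (h : Avoids π p321)
    {i j k : Fin n} (hij : i < j) (hjk : j < k) (hji : π j < π i) (hkj : π k < π j) : False := by
  refine h ⟨![i, j, k], Fin.strictMono_iff_lt_succ.mpr fun a => ?_, fun a b => ?_⟩
  · fin_cases a <;> assumption
  · have hki := hkj.trans hji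
    fin_cases a <;> fin_cases b <;> simp [p321, hji, hkj, hki, hji.not_gt, hkj.not_gt, hki.not_gt]

namespace Equiv.Perm

variable {n : ℕ}

def leftLarger (π : Equiv.Perm (Fin n)) (j : Fin n) : Finset (Fin n) :=
  univ.filter fun i => i < j ∧ π j < π i

theorem invNum_eq_sum_card_leftLarger (π : Equiv.Perm (Fin n)) :
    invNum π = ∑ j, (π.leftLarger j).card := by
  rw [invNum, card_filter, Fintype.sum_prod_type_right]
  simp only [leftLarger, card_filter]

theorem card_filter_apply_lt_s13 (π : Equiv.Perm (Fin n)) (v : Fin n) :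
    (univ.filter fun i => π i < v).card = v := by
  have : (univ.filter fun i => π i < v) = (Iio v).map π.symm.toEmbedding := by
    ext i
    simp [mem_map_equiv]
  rw [this, card_map, Fin.card_Iio]

theorem card_leftLarger_of_forall_lt (π : Equiv.Perm (Fin n)) {j : Fin n}
    (hj : ∀ k, j < k → π j < π k) : (π.leftLarger j).card = (j : ℕ) - π j := by
  have hsmaller : (Iio j).filter (fun i => π i < π j) = univ.filter fun i => π i < π j := by
    ext i
    simp only [mem_filter, mem_Iio, mem_univ, true_and, and_iff_right_iff_imp]
    intro hi
    rcases lt_trichotomy i j with hij | rfl | hji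
    · exact hij
    · exact absurd hi (lt_irrefl _)
    · exact absurd (hj i hji) hi.not_gt
  have hlarger : (Iio j).filter (fun i => ¬ π i < π j) = π.leftLarger j := by
    ext i
    simp only [leftLarger, mem_filter, mem_Iio, mem_univ, true_and, not_lt]
    refine and_congr_right fun hij => le_iff_lt_or_eq.trans (or_iff_left ?_)
    exact fun h => hij.ne (π.injective h).symm
  have hsplit := card_filter_add_card_filter_not (s := Iio j) fun i => π i < π j
  rw [hsmaller, hlarger, card_filter_apply_lt_s13, Fin.card_Iio] at hsplit
  omega

theorem forall_lt_of_leftLarger_nonempty {π : Equiv.Perm (Fin n)} (h : Avoids π p321)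
    {j : Fin n} (hne : (π.leftLarger j).Nonempty) : ∀ k, j < k → π j < π k := by
  obtain ⟨i, hi⟩ := hne
  simp only [leftLarger, mem_filter, mem_univ, true_and] at hi
  intro k hjk
  refine lt_of_not_ge fun hkj => h.not_321 hi.1 hjk hi.2 (hkj.lt_of_ne ?_)
  exact fun e => hjk.ne' (π.injective e)

end Equiv.Perm

/-- For a 321-avoiding `π`, the number of inversions equals the sum of `j − π_j` over
all right-to-left minima `π_j`. -/
theorem stmt13 (n : ℕ) (π : Equiv.Perm (Fin n)) (h : Avoids π p321) :
    invNum π =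
      ∑ j ∈ Finset.univ.filter (fun j : Fin n => ∀ k, j < k → π j < π k),
        ((j : ℕ) - (π j : ℕ)) := by
  rw [π.invNum_eq_sum_card_leftLarger, ← sum_filter_of_ne fun j _ hj =>
    π.forall_lt_of_leftLarger_nonempty h (card_ne_zero.mp hj)]
  exact sum_congr rfl fun j hj => π.card_leftLarger_of_forall_lt (mem_filter.mp hj).2

end
end

section
/- The dynamic description of stack-sorting agrees with the recursive one: for any permutation π of [n], applying the relocation operations S_{b_1}, …, S_{b_k} in increasing order of the descent tops b_1 < ⋯ < b_k of π yields S(π), where each S_{b} moves the letter b to immediately before the first letter to its right that is larger than b (or to the end if no such letter exists). -/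
open scoped Classical
noncomputable section

/-!
Write `w = u m v` with `m` the largest letter. The descent tops of `w` are those of `u`, those
of `v`, and `m` itself when `v ≠ []`; in increasing order `m` comes last. A descent top `b < m`
lying in `u` is reinserted inside `u` (at worst just before `m`), and one lying in `v` inside `v`,
so the relocations of the smaller descent tops act on `u` and `v` independently and, by
induction, turn `w` into `S(u) m S(v)`. Relocating `m` then moves it to the end, which gives
`S(u) S(v) m = S(w)`.
-/

open List

def descentTops : List ℕ → List ℕ
  | [] => []
  | [_] => []
  | a :: b :: t => (if b < a then [a] else []) ++ descentTops (b :: t)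

theorem descentTops_sublist : ∀ w : List ℕ, descentTops w <+ w
  | [] | [_] => by simp [descentTops]
  | a :: b :: t => by
    rw [descentTops]
    split_ifs
    · exact (descentTops_sublist (b :: t)).cons_cons a
    · exact (descentTops_sublist (b :: t)).cons a

theorem map_filter_range_eq_descentTops : ∀ w : List ℕ,
    (((range (w.length - 1)).filter fun i => w.getD (i + 1) 0 < w.getD i 0).map
      fun i => w.getD i 0) = descentTops w
  | [] | [_] => by simp [descentTops]
  | a :: b :: t => by
    rw [descentTops, ← map_filter_range_eq_descentTops (b :: t)]
    by_cases h : b < a <;>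
      simp [h, range_succ_eq_map, filter_map, Function.comp_def]

theorem pairwise_dtopList (w : List ℕ) : (dtopList w).Pairwise (· ≤ ·) :=
  pairwise_mergeSort' (· ≤ ·) _

theorem dtopList_perm (w : List ℕ) : dtopList w ~ descentTops w := by
  rw [dtopList, map_filter_range_eq_descentTops]
  exact mergeSort_perm _ _

theorem insBefore_perm (b : ℕ) : ∀ xs : List ℕ, insBefore b xs ~ b :: xs
  | [] => .rfl
  | x :: xs => by
    rw [insBefore]
    split_ifs
    · rfl
    · exact ((insBefore_perm b xs).cons x).trans (.swap b x xs)

theorem insBefore_append_cons_of_lt {b m : ℕ} (hbm : b < m) :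
    ∀ xs ys : List ℕ, insBefore b (xs ++ m :: ys) = insBefore b xs ++ m :: ys
  | [], ys => by simp [insBefore, hbm]
  | x :: xs, ys => by
    simp only [cons_append, insBefore, insBefore_append_cons_of_lt hbm xs ys]
    split_ifs <;> rfl

theorem insBefore_of_forall_lt {b : ℕ} : ∀ {xs : List ℕ}, (∀ x ∈ xs, x < b) →
    insBefore b xs = xs ++ [b]
  | [], _ => rfl
  | x :: xs, h => by
    rw [forall_mem_cons] at h
    simp [insBefore, h.1.not_gt, insBefore_of_forall_lt h.2]

theorem take_idxOf_append_cons_drop {b : ℕ} {w : List ℕ} (hb : b ∈ w) :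
    w.take (w.idxOf b) ++ b :: w.drop (w.idxOf b + 1) = w := by
  have h := idxOf_lt_length_iff.2 hb
  conv_rhs => rw [← take_append_drop (w.idxOf b) w, drop_eq_getElem_cons h, getElem_idxOf h]

theorem reloc_perm {b : ℕ} {w : List ℕ} (hb : b ∈ w) : reloc b w ~ w := by
  rw [reloc]
  conv_rhs => rw [← take_idxOf_append_cons_drop hb]
  exact (insBefore_perm _ _).append_left _

theorem reloc_cons_self (b : ℕ) (w : List ℕ) : reloc b (b :: w) = insBefore b w := by
  simp [reloc]

theorem reloc_cons_of_ne {b x : ℕ} (h : x ≠ b) (w : List ℕ) :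
    reloc b (x :: w) = x :: reloc b w := by
  simp [reloc, idxOf_cons_ne _ h]

theorem reloc_append_of_notMem {b : ℕ} {u : List ℕ} (hb : b ∉ u) (w : List ℕ) :
    reloc b (u ++ w) = u ++ reloc b w := by
  induction u with
  | nil => rfl
  | cons x u ih =>
    rw [mem_cons, not_or] at hb
    rw [cons_append, reloc_cons_of_ne (Ne.symm hb.1), ih hb.2, cons_append]

theorem reloc_append_cons_of_mem {b m : ℕ} {u : List ℕ} (hb : b ∈ u) (hbm : b < m)
    (w : List ℕ) : reloc b (u ++ m :: w) = reloc b u ++ m :: w := by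
  have hlt := idxOf_lt_length_iff.2 hb
  simp only [reloc, idxOf_append_of_mem hb, take_append_of_le_length hlt.le,
    drop_append_of_le_length hlt, insBefore_append_cons_of_lt hbm, append_assoc]

theorem reloc_append_cons_self_of_forall_lt {m : ℕ} {u v : List ℕ} (hu : m ∉ u)
    (hv : ∀ y ∈ v, y < m) : reloc m (u ++ m :: v) = u ++ v ++ [m] := by
  rw [reloc_append_of_notMem hu, reloc_cons_self, insBefore_of_forall_lt hv, append_assoc]

def relocSeq (s w : List ℕ) : List ℕ := s.foldl (fun w b => reloc b w) w

@[simp] theorem relocSeq_nil (w : List ℕ) : relocSeq [] w = w := rfl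

@[simp] theorem relocSeq_cons (b : ℕ) (s w : List ℕ) :
    relocSeq (b :: s) w = relocSeq s (reloc b w) := rfl

theorem relocSeq_append (s t w : List ℕ) : relocSeq (s ++ t) w = relocSeq t (relocSeq s w) :=
  foldl_append

theorem relocSeq_perm {s w : List ℕ} (hs : ∀ b ∈ s, b ∈ w) : relocSeq s w ~ w := by
  induction s generalizing w with
  | nil => rfl
  | cons b s ih =>
    have hb := reloc_perm (hs b mem_cons_self)
    exact (ih fun c hc => hb.mem_iff.2 (hs c (mem_cons_of_mem b hc))).trans hb

theorem relocSeq_filter_perm (s w : List ℕ) : relocSeq (s.filter (· ∈ w)) w ~ w :=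
  relocSeq_perm fun _ hb => of_decide_eq_true (mem_filter.1 hb).2

theorem relocSeq_append_cons {m : ℕ} {s u v : List ℕ}
    (hs : ∀ b ∈ s, b < m ∧ (b ∈ u ∨ b ∈ v)) (huv : u.Disjoint v) :
    relocSeq s (u ++ m :: v) =
      relocSeq (s.filter (· ∈ u)) u ++ m :: relocSeq (s.filter (· ∈ v)) v := by
  induction s generalizing u v with
  | nil => rfl
  | cons b s ih =>
    have hs' := fun c hc => hs c (mem_cons_of_mem b hc)
    obtain ⟨hbm, hbu | hbv⟩ := hs b mem_cons_self
    · have hp := reloc_perm hbu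
      have hbv : b ∉ v := huv hbu
      rw [relocSeq_cons, reloc_append_cons_of_mem hbu hbm,
        ih (fun c hc => by simpa [hp.mem_iff] using hs' c hc) (hp.disjoint_left.2 huv)]
      simp [hbu, hbv, hp.mem_iff]
    · have hp := reloc_perm hbv
      have hbu : b ∉ u := fun h => huv h hbv
      rw [relocSeq_cons, reloc_append_of_notMem hbu, reloc_cons_of_ne hbm.ne',
        ih (fun c hc => by simpa [hp.mem_iff] using hs' c hc) (hp.disjoint_right.2 huv)]
      simp [hbu, hbv, hp.mem_iff]

theorem descentTops_append_cons {m : ℕ} :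
    ∀ {u : List ℕ}, (∀ x ∈ u, x < m) → ∀ v : List ℕ,
      descentTops (u ++ m :: v) = descentTops u ++ descentTops (m :: v)
  | [], _, _ => rfl
  | [a], hu, v => by
    simp [descentTops, (hu a mem_cons_self).not_gt]
  | a :: b :: u, hu, v => by
    rw [forall_mem_cons] at hu
    simp only [cons_append, descentTops]
    rw [← cons_append, descentTops_append_cons hu.2, append_assoc]

theorem descentTops_cons_of_forall_lt {m : ℕ} :
    ∀ {v : List ℕ}, (∀ x ∈ v, x < m) →
      descentTops (m :: v) = (if v = [] then [] else [m]) ++ descentTops v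
  | [], _ => rfl
  | x :: v, hv => by simp [descentTops, hv x mem_cons_self]

theorem eq_mergeSort_append_of_perm {α : Type*} [LinearOrder α] {s t e : List α}
    (hs : s.Pairwise (· ≤ ·)) (he : e.Pairwise (· ≤ ·)) (hte : ∀ a ∈ t, ∀ b ∈ e, a ≤ b)
    (hp : s ~ t ++ e) : s = t.mergeSort ++ e := by
  refine hp.trans ((mergeSort_perm t _).symm.append_right e) |>.eq_of_pairwise' hs ?_
  exact pairwise_append.2 ⟨pairwise_mergeSort' _ t, he,
    fun a ha b hb => hte a ((mergeSort_perm t _).subset ha) b hb⟩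

theorem filter_mem_perm_of_perm_append {α : Type*} [DecidableEq α] {t a b c : List α}
    (h : t ~ a ++ b) (ha : ∀ x ∈ a, x ∈ c) (hb : ∀ x ∈ b, x ∉ c) : t.filter (· ∈ c) ~ a := by
  have := h.filter (· ∈ c)
  rwa [filter_append, filter_eq_self (l := a).2 (by simpa using ha),
    filter_eq_nil_iff (l := b).2 (by simpa using hb), append_nil] at this

theorem eq_mergeSort_append_of_perm_descentTops {m : ℕ} {u v s : List ℕ}
    (hu : ∀ y ∈ u, y < m) (hv : ∀ y ∈ v, y < m) (hs : s.Pairwise (· ≤ ·))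
    (hsw : s ~ descentTops (u ++ m :: v)) :
    s = (descentTops u ++ descentTops v).mergeSort ++ if v = [] then [] else [m] := by
  have he : (if v = [] then [] else [m]) <+ [m] := by split_ifs <;> simp
  refine eq_mergeSort_append_of_perm hs ((pairwise_singleton _ m).sublist he) ?_ ?_
  · intro a ha b hb
    rw [mem_singleton.1 (he.subset hb)]
    exact ((mem_append.1 ha).elim (fun h => hu a ((descentTops_sublist u).subset h))
      fun h => hv a ((descentTops_sublist v).subset h)).le
  · rw [descentTops_append_cons hu, descentTops_cons_of_forall_lt hv] at hsw
    exact hsw.trans (by simpa [append_assoc] using perm_append_comm.append_left _)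

theorem relocSeq_split_at_max {m : ℕ} {u v s : List ℕ} (huv : ∀ y ∈ u ++ v, y < m)
    (hdisj : u.Disjoint v) (hs : s.Pairwise (· ≤ ·)) (hsw : s ~ descentTops (u ++ m :: v)) :
    ∃ su sv, su.Pairwise (· ≤ ·) ∧ su ~ descentTops u ∧ sv.Pairwise (· ≤ ·) ∧
      sv ~ descentTops v ∧ relocSeq s (u ++ m :: v) = relocSeq su u ++ relocSeq sv v ++ [m] := by
  simp only [mem_append, or_imp, forall_and] at huv
  obtain ⟨hu, hv⟩ := huv
  set t := (descentTops u ++ descentTops v).mergeSort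
  have htp : t ~ descentTops u ++ descentTops v := mergeSort_perm _ _
  have hsub {b} (hb : b ∈ t) : b ∈ u ∨ b ∈ v :=
    (mem_append.1 (htp.subset hb)).imp (fun h => (descentTops_sublist u).subset h)
      fun h => (descentTops_sublist v).subset h
  refine ⟨t.filter (· ∈ u), t.filter (· ∈ v), (pairwise_mergeSort' _ _).filter _,
    filter_mem_perm_of_perm_append htp (fun _ h => (descentTops_sublist u).subset h)
      fun _ h hu' => hdisj hu' ((descentTops_sublist v).subset h),
    (pairwise_mergeSort' _ _).filter _,
    filter_mem_perm_of_perm_append (htp.trans perm_append_comm)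
      (fun _ h => (descentTops_sublist v).subset h)
      fun _ h => hdisj ((descentTops_sublist u).subset h), ?_⟩
  rw [eq_mergeSort_append_of_perm_descentTops hu hv hs hsw, relocSeq_append,
    relocSeq_append_cons (fun b hb => ⟨(hsub hb).elim (hu b) (hv b), hsub hb⟩) hdisj]
  split_ifs with hv0
  · subst hv0
    simp
  · exact reloc_append_cons_self_of_forall_lt
      (fun h => lt_irrefl m (hu m ((relocSeq_filter_perm t u).subset h)))
      fun c hc => hv c ((relocSeq_filter_perm t v).subset hc)

theorem foldr_max_zero_mem {l : List ℕ} (hl : l ≠ []) : l.foldr max 0 ∈ l :=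
  maximum_mem (foldr_max_of_ne_nil hl).symm

theorem relocSeq_eq_ssFuel {f : ℕ} {w s : List ℕ} (hf : w.length ≤ f) (hw : w.Nodup)
    (hs : s.Pairwise (· ≤ ·)) (hsw : s ~ descentTops w) : relocSeq s w = ssFuel f w := by
  induction f generalizing w s with
  | zero =>
    obtain rfl := eq_nil_of_length_eq_zero (Nat.le_zero.1 hf)
    rw [perm_nil.1 hsw]
    rfl
  | succ f ih =>
    rcases w with _ | ⟨x, xs⟩
    · rw [perm_nil.1 hsw]
      rfl
    rw [ssFuel]
    set m := (x :: xs).foldr max 0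
    set u := (x :: xs).take ((x :: xs).idxOf m)
    set v := (x :: xs).drop ((x :: xs).idxOf m + 1)
    have hw' : u ++ m :: v = x :: xs := take_idxOf_append_cons_drop (foldr_max_zero_mem (by simp))
    have hlen : u.length + v.length + 1 ≤ f + 1 := by
      rw [← hw', length_append, length_cons] at hf
      omega
    rw [← hw', nodup_middle, nodup_cons] at hw
    have hlt : ∀ y ∈ u ++ v, y < m := fun y hy => by
      have hy' : y ∈ x :: xs := hw' ▸ perm_middle.symm.subset (mem_cons_of_mem m hy)
      exact lt_of_le_of_ne (le_max_of_le' 0 hy' le_rfl) fun h => hw.1 (h ▸ hy)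
    rw [← hw'] at hsw ⊢
    obtain ⟨su, sv, hsu, hsu', hsv, hsv', heq⟩ :=
      relocSeq_split_at_max hlt (disjoint_of_nodup_append hw.2) hs hsw
    rw [heq, ih (by omega) (hw.2.sublist (sublist_append_left u v)) hsu hsu',
      ih (by omega) (hw.2.sublist (sublist_append_right u v)) hsv hsv']

/-- The dynamic description of stack-sorting agrees with the recursive one: relocating
the descent tops in increasing order yields `S(π)`. -/
theorem stmt15 (n : ℕ) (π : Equiv.Perm (Fin n)) :
    (dtopList (word π)).foldl (fun w b => reloc b w) (word π) = stackSort (word π) :=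
  relocSeq_eq_ssFuel le_rfl (nodup_ofFn.2 fun _ _ h => π.injective (Fin.ext (by simpa using h)))
    (pairwise_dtopList _) (dtopList_perm _)
end
end

section
/- Let t ≥ 1 and let π ∈ S_n(213). Then π avoids the pattern 23⋯(t+2)1 if and only if lrrp(λ(π)) ≤ t, where λ(π) is the increasing binary tree of π and lrrp(T) is one plus the maximum number of right edges on any path of T disjoint from the right arm (with lrrp = 0 when T has no left edges). -/
open scoped Classical
noncomputable section

namespace Stmt16Aux
open List

/-! ### foldr min facts -/

lemma le_foldr_min {m x : ℕ} {xs : List ℕ} (h : ∀ y ∈ xs, m ≤ y) (hx : m ≤ x) :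
    m ≤ xs.foldr min x := by
  induction xs with
  | nil => exact hx
  | cons a l ih =>
      simp only [foldr_cons, le_min_iff]
      exact ⟨h a (by simp), ih fun y hy => h y (by simp [hy])⟩

lemma foldr_min_self {m : ℕ} {xs : List ℕ} (h : ∀ y ∈ xs, m ≤ y) : xs.foldr min m = m := by
  induction xs with
  | nil => rfl
  | cons a l ih =>
      simp only [foldr_cons, ih fun y hy => h y (by simp [hy])]
      exact min_eq_right (h a (by simp))

lemma foldr_min_eq {m x : ℕ} {xs : List ℕ} (hmem : m ∈ xs) (h : ∀ y ∈ x :: xs, m ≤ y) :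
    xs.foldr min x = m := by
  induction xs with
  | nil => simp at hmem
  | cons a l ih =>
      rcases List.mem_cons.1 hmem with rfl | hmem'
      · simp only [foldr_cons]
        refine min_eq_left (le_foldr_min (fun y hy => h y ?_) (h x (by simp)))
        simp [hy]
      · have hih : ∀ y ∈ x :: l, m ≤ y := by
          intro y hy
          apply h
          rcases List.mem_cons.1 hy with rfl | hy2
          · simp
          · simp [hy2]
        rw [foldr_cons, ih hmem' hih]
        exact min_eq_right (h a (by simp))

lemma foldr_min_mem (x : ℕ) (xs : List ℕ) : xs.foldr min x ∈ x :: xs := by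
  induction xs with
  | nil => simp
  | cons a l ih =>
      simp only [foldr_cons]
      rcases min_cases a (l.foldr min x) with ⟨h, _⟩ | ⟨h, _⟩
      · rw [h]; simp
      · rw [h]
        rcases List.mem_cons.1 ih with h' | h'
        · simp [h']
        · simp [h']

/-! ### fuel stability for `lamFuel` -/

lemma lamFuel_nil (f : ℕ) : lamFuel f [] = .leaf := by cases f <;> rfl

lemma lamFuel_cons (f : ℕ) (x : ℕ) (xs : List ℕ) :
    lamFuel (f + 1) (x :: xs) =
      .node (lamFuel f ((x :: xs).take ((x :: xs).idxOf (xs.foldr min x))))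
        (xs.foldr min x)
        (lamFuel f ((x :: xs).drop ((x :: xs).idxOf (xs.foldr min x) + 1))) := rfl

lemma lamFuel_congr : ∀ f g (w : List ℕ), w.length ≤ f → w.length ≤ g →
    lamFuel f w = lamFuel g w := by
  intro f
  induction f with
  | zero =>
      intro g w hf _
      obtain rfl : w = [] := List.length_eq_zero_iff.1 (Nat.le_zero.1 hf)
      rw [lamFuel_nil, lamFuel_nil]
  | succ f ih =>
      intro g w hf hg
      match w with
      | [] => rw [lamFuel_nil, lamFuel_nil]
      | x :: xs =>
        match g, hg with
        | g + 1, hg =>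
          rw [lamFuel_cons, lamFuel_cons]
          have hmem := foldr_min_mem x xs
          have hidx : (x :: xs).idxOf (xs.foldr min x) < (x :: xs).length :=
            List.idxOf_lt_length_iff.2 hmem
          set i := (x :: xs).idxOf (xs.foldr min x)
          have hlen : (x :: xs).length = xs.length + 1 := rfl
          have h1 : ((x :: xs).take i).length ≤ f := by
            rw [List.length_take]; omega
          have h1' : ((x :: xs).take i).length ≤ g := by
            rw [List.length_take]; omega
          have h2 : ((x :: xs).drop (i + 1)).length ≤ f := by
            rw [List.length_drop]; omega
          have h2' : ((x :: xs).drop (i + 1)).length ≤ g := by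
            rw [List.length_drop]; omega
          rw [ih _ _ h1 h1', ih _ _ h2 h2']

lemma lam_fuel {f : ℕ} {w : List ℕ} (h : w.length ≤ f) : lamFuel f w = lam w :=
  lamFuel_congr f w.length w h le_rfl

lemma lam_nil : lam [] = .leaf := rfl

/-! ### the decomposition of `lam` at the minimum -/

lemma lam_cons_decomp (σ τ : List ℕ) (m : ℕ) (h : ∀ x ∈ σ ++ τ, m < x) :
    lam (σ ++ m :: τ) = .node (lam σ) m (lam τ) := by
  cases σ with
  | nil =>
      show lamFuel (τ.length + 1) (m :: τ) = _
      rw [lamFuel_cons]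
      have hm : τ.foldr min m = m :=
        foldr_min_self fun y hy => le_of_lt (h y (by simp [hy]))
      rw [hm, List.idxOf_cons_self]
      simp only [List.take_zero, List.drop_succ_cons, List.drop_zero]
      rw [lamFuel_nil, lam_fuel le_rfl, lam_nil]
  | cons y σ' =>
      show lamFuel ((σ' ++ m :: τ).length + 1) (y :: (σ' ++ m :: τ)) = _
      rw [lamFuel_cons]
      have hle : ∀ z ∈ y :: (σ' ++ m :: τ), m ≤ z := by
        intro z hz
        rcases List.mem_cons.1 hz with rfl | hz'
        · exact le_of_lt (h z (by simp))
        · rcases List.mem_append.1 hz' with h1 | h2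
          · exact le_of_lt (h z (by simp [h1]))
          · rcases List.mem_cons.1 h2 with rfl | h3
            · exact le_rfl
            · exact le_of_lt (h z (by simp [h3]))
      have hm : (σ' ++ m :: τ).foldr min y = m :=
        foldr_min_eq (by simp) hle
      rw [hm]
      have hnotmem : m ∉ y :: σ' := by
        intro hmem
        rcases List.mem_cons.1 hmem with rfl | hmem'
        · exact lt_irrefl m (h m (by simp))
        · exact lt_irrefl m (h m (by simp [hmem']))
      have hidx : (y :: (σ' ++ m :: τ)).idxOf m = (y :: σ').length := by
        have : (y :: (σ' ++ m :: τ)) = (y :: σ') ++ (m :: τ) := by simp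
        rw [this, List.idxOf_append_of_notMem hnotmem, List.idxOf_cons_self]
        omega
      rw [hidx]
      have htake : (y :: (σ' ++ m :: τ)).take (y :: σ').length = y :: σ' := by
        have : (y :: (σ' ++ m :: τ)) = (y :: σ') ++ (m :: τ) := by simp
        rw [this, List.take_left]
      have hdrop : (y :: (σ' ++ m :: τ)).drop ((y :: σ').length + 1) = τ := by
        have : (y :: (σ' ++ m :: τ)) = ((y :: σ') ++ [m]) ++ τ := by simp
        rw [this]
        have hl : (y :: σ').length + 1 = ((y :: σ') ++ [m]).length := by simp
        rw [hl, List.drop_left]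
      rw [htake, hdrop]
      have hfs : (y :: σ').length ≤ (σ' ++ m :: τ).length := by simp only [List.length_cons, List.length_append]; omega
      have hft : τ.length ≤ (σ' ++ m :: τ).length := by simp only [List.length_cons, List.length_append]; omega
      rw [lam_fuel hfs, lam_fuel hft]

end Stmt16Aux
namespace Stmt16Aux
open List

/-! ### longest increasing subsequence length -/

def incB (s : List ℕ) : Bool := decide (s.Chain' (· < ·))

def lisLen (w : List ℕ) : ℕ :=
  ((w.sublists.filter incB).map List.length).foldr max 0

lemma le_foldr_max {a : ℕ} {l : List ℕ} (h : a ∈ l) : a ≤ l.foldr max 0 := by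
  induction l with
  | nil => simp at h
  | cons b l ih =>
      rcases List.mem_cons.1 h with rfl | h'
      · exact le_max_left _ _
      · exact le_trans (ih h') (le_max_right _ _)

lemma foldr_max_mem (l : List ℕ) : l.foldr max 0 = 0 ∨ l.foldr max 0 ∈ l := by
  induction l with
  | nil => left; rfl
  | cons a l ih =>
      simp only [foldr_cons]
      rcases max_cases a (l.foldr max 0) with ⟨h, _⟩ | ⟨h, _⟩
      · right; rw [h]; simp
      · rw [h]
        rcases ih with h' | h'
        · left; exact h'
        · right; simp [h']

lemma length_le_lisLen {w s : List ℕ} (hs : s <+ w) (hc : s.Chain' (· < ·)) :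
    s.length ≤ lisLen w := by
  apply le_foldr_max
  simp only [List.mem_map]
  exact ⟨s, by simp [List.mem_filter, List.mem_sublists, hs, incB, hc], rfl⟩

lemma exists_lis (w : List ℕ) : ∃ s, s <+ w ∧ s.Chain' (· < ·) ∧ s.length = lisLen w := by
  rcases foldr_max_mem ((w.sublists.filter incB).map List.length) with h | h
  · exact ⟨[], List.nil_sublist _, List.isChain_nil, by simp [lisLen, h]⟩
  · rcases List.mem_map.1 h with ⟨s, hs, hlen⟩
    rw [List.mem_filter] at hs
    exact ⟨s, List.mem_sublists.1 hs.1, of_decide_eq_true hs.2, hlen⟩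

lemma lisLen_nil : lisLen [] = 0 := by
  obtain ⟨s, hs, _, he⟩ := exists_lis []
  rw [← he, List.sublist_nil.1 hs]; rfl

lemma lisLen_pos {w : List ℕ} (h : w ≠ []) : 1 ≤ lisLen w := by
  obtain ⟨x, hx⟩ := List.exists_mem_of_ne_nil w h
  exact length_le_lisLen (List.singleton_sublist.2 hx) (List.isChain_singleton x)

lemma lisLen_split (σ τ : List ℕ) (m : ℕ)
    (hm : ∀ b ∈ τ, m < b) (hsep : ∀ a ∈ σ, ∀ b ∈ m :: τ, b < a) :
    lisLen (σ ++ m :: τ) = max (lisLen σ) (lisLen τ + 1) := by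
  apply _root_.le_antisymm
  · obtain ⟨s, hs, hc, he⟩ := exists_lis (σ ++ m :: τ)
    rw [← he]
    obtain ⟨u, v, huv, hu, hv⟩ := List.sublist_append_iff.1 hs
    subst huv
    rcases eq_or_ne u [] with rfl | hune
    · simp only [List.nil_append] at hc ⊢
      rcases List.sublist_cons_iff.1 hv with h' | ⟨r, rfl, hr⟩
      · exact le_max_of_le_right (le_trans (length_le_lisLen h' hc) (Nat.le_succ _))
      · have : r.length ≤ lisLen τ := length_le_lisLen hr hc.tail
        apply le_max_of_le_right; simp; omega
    · rcases eq_or_ne v [] with rfl | hvne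
      · rw [List.append_nil] at hc ⊢
        exact le_max_of_le_left (length_le_lisLen hu hc)
      · exfalso
        obtain ⟨a, ha⟩ := List.exists_mem_of_ne_nil u hune
        obtain ⟨b, hb⟩ := List.exists_mem_of_ne_nil v hvne
        have hp := List.isChain_iff_pairwise.1 hc
        rw [List.pairwise_append] at hp
        have h1 : a < b := hp.2.2 a ha b hb
        have h2 : b < a := hsep a (hu.subset ha) b (hv.subset hb)
        omega
  · apply max_le
    · obtain ⟨s, hs, hc, he⟩ := exists_lis σ
      rw [← he]
      exact length_le_lisLen (hs.trans (List.sublist_append_left _ _)) hc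
    · obtain ⟨s, hs, hc, he⟩ := exists_lis τ
      have hsub : (m :: s) <+ σ ++ m :: τ :=
        (List.cons_sublist_cons.2 hs).trans (List.sublist_append_right _ _)
      have hch : (m :: s).Chain' (· < ·) := by
        unfold List.Chain' at hc ⊢
        rw [List.isChain_iff_pairwise] at hc ⊢
        rw [List.pairwise_cons]
        exact ⟨fun y hy => hm y (hs.subset hy), hc⟩
      have := length_le_lisLen hsub hch
      simp only [List.length_cons, he] at this
      omega

/-! ### 213-avoidance at the word level -/

def NoPat213 (w : List ℕ) : Prop := ¬ ∃ x y z : ℕ, [x, y, z] <+ w ∧ y < x ∧ x < z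

lemma NoPat213.sublist {w w' : List ℕ} (h : NoPat213 w) (hs : w' <+ w) : NoPat213 w' := by
  rintro ⟨x, y, z, h1, h2⟩
  exact h ⟨x, y, z, h1.trans hs, h2⟩

lemma exists_min (w : List ℕ) (hne : w ≠ []) : ∃ m ∈ w, ∀ y ∈ w, m ≤ y := by
  induction w with
  | nil => exact absurd rfl hne
  | cons x xs ih =>
      rcases eq_or_ne xs [] with rfl | h
      · exact ⟨x, by simp, by simp⟩
      · obtain ⟨m, hm, hmin⟩ := ih h
        rcases le_total m x with hh | hh
        · refine ⟨m, by simp [hm], ?_⟩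
          intro y hy
          rcases List.mem_cons.1 hy with rfl | hy'
          · exact hh
          · exact hmin y hy'
        · refine ⟨x, by simp, ?_⟩
          intro y hy
          rcases List.mem_cons.1 hy with rfl | hy'
          · exact le_rfl
          · exact hh.trans (hmin y hy')

lemma exists_decomp (w : List ℕ) (hne : w ≠ []) (hnd : w.Nodup) :
    ∃ σ m τ, w = σ ++ m :: τ ∧ (∀ x ∈ σ ++ τ, m < x) := by
  obtain ⟨m, hm, hmin⟩ := exists_min w hne
  obtain ⟨σ, τ, rfl⟩ := List.append_of_mem hm
  refine ⟨σ, m, τ, rfl, ?_⟩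
  have hnd' := hnd
  rw [List.nodup_append] at hnd'
  obtain ⟨h1, h2, hdisj⟩ := hnd'
  intro x hx
  have hmem : x ∈ σ ++ m :: τ := by
    rcases List.mem_append.1 hx with h' | h'
    · exact List.mem_append_left _ h'
    · exact List.mem_append_right _ (List.mem_cons_of_mem _ h')
  have hxm : x ≠ m := by
    rintro rfl
    rcases List.mem_append.1 hx with h' | h'
    · exact hdisj _ h' _ List.mem_cons_self rfl
    · rw [List.nodup_cons] at h2
      exact h2.1 h'
  exact lt_of_le_of_ne (hmin x hmem) (Ne.symm hxm)

end Stmt16Aux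
namespace Stmt16Aux
open List

lemma max_add_one (a b : ℕ) : max a b + 1 = max (a + 1) (b + 1) := by
  rcases le_total a b with h | h
  · rw [max_eq_right h, max_eq_right (by omega)]
  · rw [max_eq_left h, max_eq_left (by omega)]

lemma hsep_of_nopat {σ τ : List ℕ} {m : ℕ}
    (hnd : (σ ++ m :: τ).Nodup) (hnp : NoPat213 (σ ++ m :: τ))
    (hm : ∀ x ∈ σ ++ τ, m < x) :
    ∀ a ∈ σ, ∀ b ∈ m :: τ, b < a := by
  intro a ha b hb
  rcases List.mem_cons.1 hb with rfl | hbτ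
  · exact hm a (List.mem_append_left _ ha)
  · by_contra hcon
    push_neg at hcon
    have hab : a ≠ b := by
      rintro rfl
      rw [List.nodup_append] at hnd
      exact hnd.2.2 _ ha _ (List.mem_cons_of_mem _ hbτ) rfl
    have halt : a < b := lt_of_le_of_ne hcon hab
    have hsub : [a, m, b] <+ σ ++ m :: τ := by
      have h1 : [a] <+ σ := List.singleton_sublist.2 ha
      have h2 : [m, b] <+ m :: τ := List.cons_sublist_cons.2 (List.singleton_sublist.2 hbτ)
      exact List.Sublist.append h1 h2
    exact hnp ⟨a, m, b, hsub, hm a (List.mem_append_left _ ha), halt⟩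

lemma rstart_rany_aux : ∀ N (w : List ℕ), w.length ≤ N → w.Nodup → NoPat213 w → w ≠ [] →
    rstart (lam w) + 1 = lisLen w ∧ rany (lam w) + 1 = lisLen w := by
  intro N
  induction N with
  | zero =>
      intro w hlen _ _ hne
      exact absurd (List.length_eq_zero_iff.1 (Nat.le_zero.1 hlen)) hne
  | succ N ih =>
      intro w hlen hnd hnp hne
      obtain ⟨σ, m, τ, rfl, hm⟩ := exists_decomp w hne hnd
      have hmτ : ∀ b ∈ τ, m < b := fun b hb => hm b (List.mem_append_right _ hb)
      have hsep := hsep_of_nopat hnd hnp hm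
      have hσsub : σ <+ σ ++ m :: τ := List.sublist_append_left _ _
      have hτsub : τ <+ σ ++ m :: τ :=
        (List.sublist_cons_self _ _).trans (List.sublist_append_right _ _)
      have hlenσ : σ.length ≤ N := by
        have := @List.length_append _ σ (m :: τ); simp at hlen ⊢; omega
      have hlenτ : τ.length ≤ N := by simp at hlen ⊢; omega
      have hw : lisLen (σ ++ m :: τ) = max (lisLen σ) (lisLen τ + 1) :=
        lisLen_split σ τ m hmτ hsep
      have hlam : lam (σ ++ m :: τ) = .node (lam σ) m (lam τ) := lam_cons_decomp σ τ m hm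
      have hleσ : lisLen σ ≤ lisLen (σ ++ m :: τ) := by
        rw [hw]; exact le_max_left _ _
      have hleτ : lisLen τ + 1 ≤ lisLen (σ ++ m :: τ) := by
        rw [hw]; exact le_max_right _ _
      rw [hlam]
      rcases eq_or_ne τ [] with rfl | hτne
      · have hlτ : lam ([] : List ℕ) = .leaf := lam_nil
        rw [hlτ]
        rcases eq_or_ne σ [] with rfl | hσne
        · rw [lam_nil]
          simp only [rstart, rany]
          rw [hw, lisLen_nil]
          constructor <;> simp
        · obtain ⟨ih1, ih2⟩ := ih σ hlenσ (hnd.sublist hσsub) (hnp.sublist hσsub) hσne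
          have hσpos : 1 ≤ lisLen σ := lisLen_pos hσne
          have hrr : rstart (BT.node (lam σ) m .leaf) = rstart (lam σ) := rfl
          have hra : rany (BT.node (lam σ) m .leaf) =
              max (rstart (BT.node (lam σ) m .leaf)) (max (rany (lam σ)) (rany .leaf)) := rfl
          constructor
          · rw [hrr, ih1, hw, lisLen_nil]
            have : max (lisLen σ) (0 + 1) = lisLen σ := max_eq_left (by omega)
            omega
            -- fallback
          · rw [hra, hrr]
            have h0 : rany BT.leaf = 0 := rfl
            rw [h0]
            have e1 : max (rany (lam σ)) 0 = rany (lam σ) := max_eq_left (Nat.zero_le _)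
            rw [e1]
            have e2 : max (rstart (lam σ)) (rany (lam σ)) = rany (lam σ) := by
              apply max_eq_right; omega
            rw [e2, ih2, hw, lisLen_nil]
            have : max (lisLen σ) (0 + 1) = lisLen σ := max_eq_left (by omega)
            omega
      · obtain ⟨ihτ1, ihτ2⟩ := ih τ hlenτ (hnd.sublist hτsub) (hnp.sublist hτsub) hτne
        have hτpos : 1 ≤ lisLen τ := lisLen_pos hτne
        -- lam τ is a node
        obtain ⟨σ2, m2, τ2, hτeq, hm2⟩ :=
          exists_decomp τ hτne (hnd.sublist hτsub)
        have hτnode : lam τ = .node (lam σ2) m2 (lam τ2) := by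
          rw [hτeq]; exact lam_cons_decomp σ2 τ2 m2 hm2
        have hrstart : rstart (BT.node (lam σ) m (lam τ)) =
            max (rstart (lam σ)) (1 + rstart (lam τ)) := by
          rw [hτnode]; rfl
        have hrany : rany (BT.node (lam σ) m (lam τ)) =
            max (rstart (BT.node (lam σ) m (lam τ))) (max (rany (lam σ)) (rany (lam τ))) := rfl
        rcases eq_or_ne σ [] with rfl | hσne
        · have hl0 : lam ([] : List ℕ) = .leaf := lam_nil
          have hrs0 : rstart BT.leaf = 0 := rfl
          have hra0 : rany BT.leaf = 0 := rfl
          rw [hl0] at hrstart hrany ⊢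
          rw [hrs0] at hrstart
          have e0 : max 0 (1 + rstart (lam τ)) = 1 + rstart (lam τ) := max_eq_right (Nat.zero_le _)
          rw [e0] at hrstart
          constructor
          · rw [hrstart, hw, lisLen_nil]
            have : max 0 (lisLen τ + 1) = lisLen τ + 1 := max_eq_right (Nat.zero_le _)
            omega
          · rw [hrany, hrstart, hra0]
            have e1 : max 0 (rany (lam τ)) = rany (lam τ) := max_eq_right (Nat.zero_le _)
            rw [e1]
            have e2 : max (1 + rstart (lam τ)) (rany (lam τ)) = 1 + rstart (lam τ) := by
              apply max_eq_left; omega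
            rw [e2, hw, lisLen_nil]
            have : max 0 (lisLen τ + 1) = lisLen τ + 1 := max_eq_right (Nat.zero_le _)
            omega
        · obtain ⟨ihσ1, ihσ2⟩ := ih σ hlenσ (hnd.sublist hσsub) (hnp.sublist hσsub) hσne
          have hσpos : 1 ≤ lisLen σ := lisLen_pos hσne
          have hkey : rstart (BT.node (lam σ) m (lam τ)) + 1 = lisLen (σ ++ m :: τ) := by
            have e3 : (1 + rstart (lam τ)) + 1 = lisLen τ + 1 := by omega
            rw [hrstart, hw, max_add_one, ihσ1, e3]
          refine ⟨hkey, ?_⟩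
          rw [hrany]
          have e2 : max (rany (lam σ)) (rany (lam τ)) ≤ rstart (BT.node (lam σ) m (lam τ)) := by
            apply max_le <;> omega
          rw [max_eq_left e2]
          exact hkey

lemma rstart_rany_lam {w : List ℕ} (hnd : w.Nodup) (hnp : NoPat213 w) (hne : w ≠ []) :
    rstart (lam w) + 1 = lisLen w ∧ rany (lam w) + 1 = lisLen w :=
  rstart_rany_aux w.length w le_rfl hnd hnp hne

end Stmt16Aux
namespace Stmt16Aux
open List

/-! ### the pattern 2 3 ⋯ (t+2) 1 at the word level -/

def ContainsPat (w : List ℕ) (t : ℕ) : Prop :=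
  ∃ x s a, (x :: s ++ [a]) <+ w ∧ (x :: s).Chain' (· < ·) ∧ s.length = t ∧ a < x

lemma not_containsPat_nil (t : ℕ) : ¬ ContainsPat [] t := by
  rintro ⟨x, s, a, hsub, -, -, -⟩
  have := List.sublist_nil.1 hsub
  simp at this

lemma containsPat_split (σ τ : List ℕ) (m : ℕ) (t : ℕ)
    (hnd : (σ ++ m :: τ).Nodup)
    (hm : ∀ b ∈ τ, m < b) (hsep : ∀ a ∈ σ, ∀ b ∈ m :: τ, b < a) :
    ContainsPat (σ ++ m :: τ) t ↔ t + 1 ≤ lisLen σ ∨ ContainsPat τ t := by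
  constructor
  · rintro ⟨x, s, a, hsub, hch, hlen, hax⟩
    obtain ⟨u, v, huv, hu, hv⟩ := List.sublist_append_iff.1 hsub
    rcases eq_or_ne u [] with rfl | hune
    · rw [List.nil_append] at huv
      rw [← huv] at hv
      rcases List.sublist_cons_iff.1 hv with h' | ⟨r, hr, hrs⟩
      · exact Or.inr ⟨x, s, a, h', hch, hlen, hax⟩
      · exfalso
        rw [List.cons_append] at hr
        injection hr with h1 h2
        subst h1
        have hamem : a ∈ x :: τ := hv.subset (by simp)
        rcases List.mem_cons.1 hamem with rfl | haτ
        · omega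
        · have := hm a haτ; omega
    · obtain ⟨x', u', rfl⟩ := List.exists_cons_of_ne_nil hune
      rw [List.cons_append, List.cons_append] at huv
      injection huv with h1 htail
      subst h1
      have hxσ : x ∈ σ := hu.subset (by simp)
      rcases eq_or_ne v [] with rfl | hvne
      · left
        rw [List.append_nil] at htail
        have hu2 : x :: (s ++ [a]) <+ σ := by
          rw [← htail] at hu
          simpa using hu
        have hxs : (x :: s) <+ σ := by
          have h1 : (x :: s) <+ x :: (s ++ [a]) :=
            List.cons_sublist_cons.2 (List.sublist_append_left _ _)
          exact h1.trans hu2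
        have := length_le_lisLen hxs hch
        simp at this; omega
      · obtain ⟨b, v', rfl⟩ := List.exists_cons_of_ne_nil hvne
        have hbmem : b ∈ m :: τ := hv.subset (by simp)
        have hbx : b < x := hsep x hxσ b hbmem
        have hb2 : b ∈ s ++ [a] := by rw [htail]; simp
        rcases List.mem_append.1 hb2 with hbs | hba
        · have hxb : x < b := by
            have hp := List.isChain_iff_pairwise.1 hch
            exact (List.pairwise_cons.1 hp).1 b hbs
          omega
        · have hba2 : b = a := by simpa using hba
          subst hba2
          cases v' with
          | nil =>
              left
              have hueq : x :: u' = x :: s := by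
                apply List.append_cancel_right (bs := [b])
                rw [List.cons_append, List.cons_append, htail]
              have hxs : (x :: s) <+ σ := hueq ▸ hu
              have := length_le_lisLen hxs hch
              simp at this; omega
          | cons c v'' =>
              exfalso
              have hndf : (x :: (s ++ [b])).Nodup := by
                have := hsub.nodup hnd
                simpa using this
              have hnds : (u' ++ b :: c :: v'').Nodup := by
                have h6 := (List.nodup_cons.1 hndf).2
                rw [htail] at h6
                exact h6
              have hlast : (u' ++ b :: c :: v'').getLast? = some b := by
                rw [← htail]
                exact List.getLast?_concat
              have hlast2 : (u' ++ b :: c :: v'').getLast? = (c :: v'').getLast? := by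
                rw [List.getLast?_append, List.getLast?_cons_cons]
                cases h4 : (c :: v'').getLast? with
                | none =>
                    rw [List.getLast?_eq_none_iff] at h4
                    simp at h4
                | some z => rfl
              have h7 : (c :: v'').getLast? = some b := by rw [← hlast2, hlast]
              have hbmem2 : b ∈ c :: v'' := by
                obtain ⟨h5, h6⟩ := List.mem_getLast?_eq_getLast (Option.mem_def.mpr h7)
                rw [h6]; exact List.getLast_mem h5
              rw [List.nodup_append] at hnds
              exact (List.nodup_cons.1 hnds.2.1).1 hbmem2
  · rintro (h | ⟨x, s, a, hsub, hch, hlen, hax⟩)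
    · obtain ⟨s, hs, hc, he⟩ := exists_lis σ
      set s' := s.take (t + 1) with hs'
      have hlen' : s'.length = t + 1 := by
        rw [hs', List.length_take]; omega
      obtain ⟨x, rest, hxe⟩ : ∃ x rest, s' = x :: rest := by
        apply List.exists_cons_of_ne_nil
        intro hnil; rw [hnil] at hlen'; simp at hlen'
      have hs'sub : s' <+ σ := (List.take_sublist _ _).trans hs
      have hch' : s'.Chain' (· < ·) := by
        unfold List.Chain' at hc ⊢
        rw [List.isChain_iff_pairwise] at hc ⊢
        exact List.Pairwise.sublist (List.take_sublist _ _) hc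
      have hxσ : x ∈ σ := hs'sub.subset (by rw [hxe]; simp)
      refine ⟨x, rest, m, ?_, hxe ▸ hch', by
        have := hlen'; rw [hxe] at this; simp at this; exact this, hsep x hxσ m (by simp)⟩
      have h1 : (x :: rest) <+ σ := hxe ▸ hs'sub
      have h2 : [m] <+ m :: τ := List.cons_sublist_cons.2 (List.nil_sublist _)
      have := List.Sublist.append h1 h2
      simpa using this
    · exact ⟨x, s, a,
        hsub.trans ((List.sublist_cons_self _ _).trans (List.sublist_append_right _ _)),
        hch, hlen, hax⟩

end Stmt16Aux
namespace Stmt16Aux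
open List

lemma isLeaf_eq_leaf {T : BT} (h : T.isLeaf = true) : T = .leaf := by
  cases T with
  | leaf => rfl
  | node l x r => simp [BT.isLeaf] at h

lemma noLeft_arm : ∀ T : BT, hasLeft T = false → ∀ p ∈ armSubs T, p.2 = BT.leaf := by
  intro T
  induction T with
  | leaf => intro _ p hp; simp [armSubs] at hp
  | node l x r ihl ihr =>
      intro h p hp
      rw [hasLeft] at h
      simp only [Bool.or_eq_false_iff] at h
      obtain ⟨⟨hl1, _⟩, hr⟩ := h
      rw [armSubs] at hp
      rcases List.mem_cons.1 hp with rfl | hp'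
      · exact isLeaf_eq_leaf (by simpa using hl1)
      · exact ihr hr p hp'

lemma foldr_max_zero_of_all {l : List ℕ} (h : ∀ x ∈ l, x = 0) : l.foldr max 0 = 0 := by
  induction l with
  | nil => rfl
  | cons a l ih =>
      simp only [foldr_cons]
      rw [h a (by simp), ih fun x hx => h x (by simp [hx])]
      rfl

lemma arm_fold_zero {T : BT} (h : hasLeft T = false) :
    ((armSubs T).map fun p => rany p.2).foldr max 0 = 0 := by
  apply foldr_max_zero_of_all
  intro x hx
  rcases List.mem_map.1 hx with ⟨p, hp, rfl⟩
  rw [noLeft_arm T h p hp]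
  rfl

lemma lrrp_node_iff {t : ℕ} (ht : 1 ≤ t) (l : BT) (x : ℕ) (r : BT) :
    t + 1 ≤ lrrp (.node l x r) ↔ t ≤ rany l ∨ t + 1 ≤ lrrp r := by
  by_cases h : hasLeft (BT.node l x r) = true
  · rw [lrrp, if_pos h]
    have harm : armSubs (BT.node l x r) = (x, l) :: armSubs r := rfl
    rw [harm, List.map_cons, List.foldr_cons]
    have key : t + 1 ≤ 1 + max (rany l) (((armSubs r).map fun p => rany p.2).foldr max 0) ↔
        t ≤ rany l ∨ t ≤ ((armSubs r).map fun p => rany p.2).foldr max 0 := by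
      rw [← le_max_iff]; omega
    rw [key]
    by_cases hr : hasLeft r = true
    · rw [lrrp, if_pos hr]
      constructor
      · rintro (h' | h')
        · exact Or.inl h'
        · exact Or.inr (by omega)
      · rintro (h' | h')
        · exact Or.inl h'
        · exact Or.inr (by omega)
    · rw [lrrp, if_neg hr]
      rw [arm_fold_zero (Bool.not_eq_true _ ▸ hr : hasLeft r = false)]
      constructor
      · rintro (h' | h')
        · exact Or.inl h'
        · omega
      · rintro (h' | h')
        · exact Or.inl h'
        · omega
  · rw [lrrp, if_neg h]
    have h' : hasLeft (BT.node l x r) = false := Bool.not_eq_true _ ▸ h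
    rw [hasLeft] at h'
    simp only [Bool.or_eq_false_iff] at h'
    obtain ⟨⟨hl1, _⟩, hr⟩ := h'
    have hleaf : l = .leaf := isLeaf_eq_leaf (by simpa using hl1)
    have h1 : rany l = 0 := by rw [hleaf]; rfl
    have h2 : lrrp r = 0 := by rw [lrrp, if_neg (by simp [hr])]
    rw [h1, h2]
    omega

lemma main_aux (t : ℕ) (ht : 1 ≤ t) :
    ∀ N (w : List ℕ), w.length ≤ N → w.Nodup → NoPat213 w →
      (ContainsPat w t ↔ t + 1 ≤ lrrp (lam w)) := by
  intro N
  induction N with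
  | zero =>
      intro w hlen _ _
      obtain rfl : w = [] := List.length_eq_zero_iff.1 (Nat.le_zero.1 hlen)
      rw [lam_nil]
      constructor
      · intro h; exact absurd h (not_containsPat_nil t)
      · intro h
        rw [lrrp, if_neg (by simp [hasLeft])] at h
        omega
  | succ N ih =>
      intro w hlen hnd hnp
      rcases eq_or_ne w [] with rfl | hne
      · rw [lam_nil]
        constructor
        · intro h; exact absurd h (not_containsPat_nil t)
        · intro h
          rw [lrrp, if_neg (by simp [hasLeft])] at h
          omega
      · obtain ⟨σ, m, τ, rfl, hm⟩ := exists_decomp w hne hnd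
        have hmτ : ∀ b ∈ τ, m < b := fun b hb => hm b (List.mem_append_right _ hb)
        have hsep := hsep_of_nopat hnd hnp hm
        have hσsub : σ <+ σ ++ m :: τ := List.sublist_append_left _ _
        have hτsub : τ <+ σ ++ m :: τ :=
          (List.sublist_cons_self _ _).trans (List.sublist_append_right _ _)
        have hlenτ : τ.length ≤ N := by simp at hlen ⊢; omega
        rw [lam_cons_decomp σ τ m hm, lrrp_node_iff ht,
          containsPat_split σ τ m t hnd hmτ hsep]
        have h2 : ContainsPat τ t ↔ t + 1 ≤ lrrp (lam τ) :=
          ih τ hlenτ (hnd.sublist hτsub) (hnp.sublist hτsub)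
        have h1 : t + 1 ≤ lisLen σ ↔ t ≤ rany (lam σ) := by
          rcases eq_or_ne σ [] with rfl | hσne
          · rw [lisLen_nil, lam_nil]
            have : rany BT.leaf = 0 := rfl
            rw [this]
            omega
          · have := (rstart_rany_lam (hnd.sublist hσsub) (hnp.sublist hσsub) hσne).2
            omega
        rw [h1, h2]

end Stmt16Aux
namespace Stmt16Aux
open List

lemma word_length {n : ℕ} (π : Equiv.Perm (Fin n)) : (word π).length = n :=
  List.length_ofFn

lemma word_nodup {n : ℕ} (π : Equiv.Perm (Fin n)) : (word π).Nodup := by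
  rw [word, List.nodup_ofFn]
  intro a b hab
  simp only [Nat.add_right_cancel_iff] at hab
  exact π.injective (Fin.val_injective hab)

lemma word_get {n : ℕ} (π : Equiv.Perm (Fin n)) (i : Fin (word π).length) :
    (word π).get i = (π (Fin.cast (word_length π) i) : ℕ) + 1 := by
  exact List.get_ofFn _ _

lemma nopat_of_avoids {n : ℕ} (π : Equiv.Perm (Fin n)) (h : Avoids π p213) :
    NoPat213 (word π) := by
  rintro ⟨x, y, z, hsub, hyx, hxz⟩
  apply h
  obtain ⟨e, he⟩ := List.sublist_iff_exists_fin_orderEmbedding_get_eq.1 hsub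
  set f : Fin 3 → Fin n := fun i => Fin.cast (word_length π) (e i) with hf
  have hsm : StrictMono f := by
    intro i j hij
    have h2 := e.strictMono hij
    rw [Fin.lt_def] at h2 ⊢
    simpa [hf, Fin.coe_cast] using h2
  have hv : ∀ ix : Fin 3, [x, y, z].get ix = (π (f ix) : ℕ) + 1 := by
    intro ix
    rw [he ix, word_get]
  have n0 : (π (f 0) : ℕ) + 1 = x := (hv 0).symm
  have n1 : (π (f 1) : ℕ) + 1 = y := (hv 1).symm
  have n2 : (π (f 2) : ℕ) + 1 = z := (hv 2).symm
  refine ⟨f, hsm, ?_⟩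
  have hyz : y < z := lt_trans hyx hxz
  have v00 : ¬ π (f 0) < π (f 0) := lt_irrefl _
  have v11 : ¬ π (f 1) < π (f 1) := lt_irrefl _
  have v22 : ¬ π (f 2) < π (f 2) := lt_irrefl _
  have v01 : ¬ π (f 0) < π (f 1) := by simp only [Fin.lt_def]; omega
  have v02 : π (f 0) < π (f 2) := by simp only [Fin.lt_def]; omega
  have v10 : π (f 1) < π (f 0) := by simp only [Fin.lt_def]; omega
  have v12 : π (f 1) < π (f 2) := by simp only [Fin.lt_def]; omega
  have v20 : ¬ π (f 2) < π (f 0) := by simp only [Fin.lt_def]; omega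
  have v21 : ¬ π (f 2) < π (f 1) := by simp only [Fin.lt_def]; omega
  intro a b
  fin_cases a <;> fin_cases b
  · exact iff_of_false (by decide) v00
  · exact iff_of_false (by decide) v01
  · exact iff_of_true (by decide) v02
  · exact iff_of_true (by decide) v10
  · exact iff_of_false (by decide) v11
  · exact iff_of_true (by decide) v12
  · exact iff_of_false (by decide) v20
  · exact iff_of_false (by decide) v21
  · exact iff_of_false (by decide) v22

end Stmt16Aux
namespace Stmt16Aux
open List

lemma rot_val {t : ℕ} (i : Fin (t + 2)) :
    ((finRotate (t + 2)) i : ℕ) = if (i : ℕ) = t + 1 then 0 else (i : ℕ) + 1 := by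
  rw [finRotate_succ_apply, Fin.val_add_one]
  by_cases hi : i = Fin.last (t + 1)
  · rw [if_pos hi, if_pos (by rw [hi, Fin.val_last])]
  · rw [if_neg hi, if_neg (fun hv => hi (Fin.ext (by rw [Fin.val_last]; exact hv)))]

lemma containsPat_of_occ {n t : ℕ} (π : Equiv.Perm (Fin n)) (f : Fin (t + 2) → Fin n)
    (hsm : StrictMono f)
    (hiff : ∀ a b, (finRotate (t + 2)) a < (finRotate (t + 2)) b ↔ π (f a) < π (f b)) :
    ContainsPat (word π) t := by
  set u : Fin (t + 2) → ℕ := fun i => (π (f i) : ℕ) + 1 with hu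
  have hmono : ∀ a b : Fin (t + 2), (a : ℕ) < (b : ℕ) → (b : ℕ) ≤ t → π (f a) < π (f b) := by
    intro a b hab hb
    apply (hiff a b).1
    rw [Fin.lt_def, rot_val, rot_val]
    rw [if_neg (by omega), if_neg (by omega)]
    omega
  have hlast : ∀ b : Fin (t + 2), (b : ℕ) ≤ t → π (f (Fin.last (t + 1))) < π (f b) := by
    intro b hb
    apply (hiff _ b).1
    rw [Fin.lt_def, rot_val, rot_val, Fin.val_last, if_pos rfl, if_neg (by omega)]
    omega
  have hofn : List.ofFn u =
      (List.ofFn fun i : Fin (t + 1) => u i.castSucc) ++ [u (Fin.last (t + 1))] := by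
    rw [List.ofFn_succ', List.concat_eq_append]
  have hc : (List.ofFn fun i : Fin (t + 1) => u i.castSucc)
      = u ((0 : Fin (t + 1)).castSucc) :: List.ofFn (fun i : Fin t => u i.succ.castSucc) :=
    List.ofFn_succ
  have hsubl : List.ofFn u <+ word π := by
    rw [List.sublist_iff_exists_fin_orderEmbedding_get_eq]
    have hmonoemb : StrictMono
        (fun i : Fin (List.ofFn u).length =>
          Fin.cast (word_length π).symm (f (Fin.cast (List.length_ofFn (f := u)) i))) := by
      intro i j hij
      rw [Fin.lt_def]
      simp only [Fin.coe_cast]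
      exact hsm (by rw [Fin.lt_def]; simpa [Fin.coe_cast] using hij)
    refine ⟨OrderEmbedding.ofStrictMono _ hmonoemb, ?_⟩
    intro ix
    rw [List.get_ofFn, word_get]
    rfl
  refine ⟨u ((0 : Fin (t + 1)).castSucc), List.ofFn (fun i : Fin t => u i.succ.castSucc),
    u (Fin.last (t + 1)), ?_, ?_, ?_, ?_⟩
  · have heq : u ((0 : Fin (t + 1)).castSucc) ::
        List.ofFn (fun i : Fin t => u i.succ.castSucc) ++ [u (Fin.last (t + 1))]
        = List.ofFn u := by
      rw [hofn, hc]
    rw [heq]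
    exact hsubl
  · rw [← hc]; unfold List.Chain'; rw [List.isChain_iff_pairwise, List.pairwise_ofFn]
    intro i j hij
    have hj : ((j.castSucc : Fin (t + 2)) : ℕ) ≤ t := by
      have := j.isLt
      simp only [Fin.coe_castSucc]
      omega
    have h2 := hmono i.castSucc j.castSucc
      (by simpa [Fin.coe_castSucc] using (Fin.lt_def.1 hij)) hj
    rw [Fin.lt_def] at h2
    simp only [hu]
    omega
  · exact List.length_ofFn
  · have h2 := hlast ((0 : Fin (t + 1)).castSucc) (by simp)
    rw [Fin.lt_def] at h2
    simp only [hu]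
    omega

lemma occ_of_containsPat {n t : ℕ} (π : Equiv.Perm (Fin n))
    (hcp : ContainsPat (word π) t) :
    ∃ f : Fin (t + 2) → Fin n, StrictMono f ∧
      ∀ a b, (finRotate (t + 2)) a < (finRotate (t + 2)) b ↔ π (f a) < π (f b) := by
  obtain ⟨x, s, a, hsub, hch, hlen, hax⟩ := hcp
  have hflen : (x :: s ++ [a]).length = t + 2 := by simp [hlen]
  obtain ⟨e, he⟩ := List.sublist_iff_exists_fin_orderEmbedding_get_eq.1 hsub
  set f : Fin (t + 2) → Fin n :=
    fun i => Fin.cast (word_length π) (e (Fin.cast hflen.symm i)) with hf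
  have hsm : StrictMono f := by
    intro i j hij
    have h2 := e.strictMono
      (show Fin.cast hflen.symm i < Fin.cast hflen.symm j by
        rw [Fin.lt_def]; simpa [Fin.coe_cast] using hij)
    rw [Fin.lt_def] at h2 ⊢
    simpa [hf, Fin.coe_cast] using h2
  have hxslen : (x :: s).length = t + 1 := by simp [hlen]
  have L3 : (s ++ [a]).length = t + 1 := by simp [hlen]
  have L4 : s.length = t := hlen
  have hval : ∀ i : Fin (t + 2),
      (π (f i) : ℕ) + 1 = (x :: s ++ [a]).getD (i : ℕ) 0 := by
    intro i
    have h1 := he (Fin.cast hflen.symm i)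
    rw [word_get, List.get_eq_getElem] at h1
    simp only [Fin.coe_cast] at h1
    rw [List.getD_eq_getElem _ _ (show (i : ℕ) < (x :: s ++ [a]).length from by omega)]
    rw [h1]
  have hgl : ∀ k : ℕ, k ≤ t → (x :: s ++ [a]).getD k 0 = (x :: s).getD k 0 := by
    intro k hk
    cases k with
    | zero => rfl
    | succ k' =>
        show (s ++ [a]).getD k' 0 = s.getD k' 0
        exact List.getD_append _ _ _ _ (by omega)
  have hgetlast : (π (f (Fin.last (t + 1))) : ℕ) + 1 = a := by
    rw [hval (Fin.last (t + 1)), Fin.val_last]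
    show (s ++ [a]).getD t 0 = a
    rw [List.getD_eq_getElem _ _ (by omega)]
    exact List.getElem_concat_length (by omega) _
  have hpair := List.pairwise_iff_get.1 (List.isChain_iff_pairwise.1 hch)
  have hpair' : ∀ k l : ℕ, k < l → l ≤ t →
      (x :: s).getD k 0 < (x :: s).getD l 0 := by
    intro k l hkl hl
    rw [List.getD_eq_getElem _ _ (by omega), List.getD_eq_getElem _ _ (by omega)]
    have h3 := hpair ⟨k, by omega⟩ ⟨l, by omega⟩ (Fin.mk_lt_mk.2 hkl)
    simpa [List.get_eq_getElem] using h3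
  have hV : ∀ i j : Fin (t + 2), (i : ℕ) < (j : ℕ) → (j : ℕ) ≤ t →
      (π (f i) : ℕ) < (π (f j) : ℕ) := by
    intro i j hij hj
    have h1 := hval i
    have h2 := hval j
    rw [hgl (i : ℕ) (by omega)] at h1
    rw [hgl (j : ℕ) hj] at h2
    have h3 := hpair' (i : ℕ) (j : ℕ) hij hj
    omega
  have hVlast : ∀ i : Fin (t + 2), (i : ℕ) ≤ t →
      (π (f (Fin.last (t + 1))) : ℕ) < (π (f i) : ℕ) := by
    intro i hi
    have h1 := hval (0 : Fin (t + 2))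
    rw [hgl ((0 : Fin (t + 2)) : ℕ) (by simp)] at h1
    have h0 : ((0 : Fin (t + 2)) : ℕ) = 0 := rfl
    rw [h0] at h1
    have hx0 : (x :: s).getD 0 0 = x := rfl
    rw [hx0] at h1
    rcases Nat.eq_zero_or_pos (i : ℕ) with hz | hpos
    · have hieq : i = (0 : Fin (t + 2)) := Fin.ext (by rw [h0]; omega)
      rw [hieq]
      omega
    · have h2 := hV (0 : Fin (t + 2)) i (by omega) hi
      omega
  refine ⟨f, hsm, ?_⟩
  intro a' b'
  rw [Fin.lt_def, Fin.lt_def, rot_val, rot_val]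
  by_cases ha : (a' : ℕ) = t + 1 <;> by_cases hb : (b' : ℕ) = t + 1
  · have : a' = b' := Fin.ext (by omega)
    subst this
    simp [ha]
  · rw [if_pos ha, if_neg hb]
    have ha' : a' = Fin.last (t + 1) := Fin.ext (by rw [Fin.val_last]; exact ha)
    subst ha'
    have := hVlast b' (by omega)
    constructor
    · intro _; exact this
    · intro _; omega
  · rw [if_neg ha, if_pos hb]
    have hb' : b' = Fin.last (t + 1) := Fin.ext (by rw [Fin.val_last]; exact hb)
    subst hb'
    have := hVlast a' (by omega)
    constructor
    · intro hcon; omega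
    · intro hcon; omega
  · rw [if_neg ha, if_neg hb]
    rcases lt_trichotomy (a' : ℕ) (b' : ℕ) with h1 | h1 | h1
    · have := hV a' b' h1 (by omega)
      constructor
      · intro _; exact this
      · intro _; omega
    · have : a' = b' := Fin.ext h1
      subst this
      constructor
      · intro hcon; omega
      · intro hcon; omega
    · have := hV b' a' h1 (by omega)
      constructor
      · intro hcon; omega
      · intro hcon; omega

end Stmt16Aux
/-- A 213-avoiding `π` avoids `23⋯(t+2)1` iff `lrrp(λ(π)) ≤ t`. -/
theorem stmt16 (n t : ℕ) (ht : 1 ≤ t) (π : Equiv.Perm (Fin n)) (h : Avoids π p213) :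
    Avoids π (finRotate (t + 2)) ↔ lrrp (lam (word π)) ≤ t := by
  have hnp : Stmt16Aux.NoPat213 (word π) := Stmt16Aux.nopat_of_avoids π h
  have hnd := Stmt16Aux.word_nodup π
  have hmain := Stmt16Aux.main_aux t ht (word π).length (word π) le_rfl hnd hnp
  constructor
  · intro hav
    by_contra hlt
    push_neg at hlt
    exact hav ⟨_, (Stmt16Aux.occ_of_containsPat π (hmain.2 (by omega))).choose_spec⟩
  · intro hle
    rintro ⟨f, hsm, hiff⟩
    have := hmain.1 (Stmt16Aux.containsPat_of_occ π f hsm hiff)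
    omega

end
end
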